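/- arXiv:1101.2859 — 11 statements merged into one kernel-verified Lean document; each statement's English description precedes it below -/
import Mathlib

section
/- Let H be a complex Hilbert space, (X, ν) a measure space, and ψ : X → H a total family (its closed linear span is H) such that x ↦ ⟨ψ_x, f⟩ is ν-measurable for every f ∈ H, with analysis operator C defined on Dom(C) = {f ∈ H : x ↦ ⟨ψ_x, f⟩ ∈ L²(X, ν)} by (C f)(x) = ⟨ψ_x, f⟩. Then ψ satisfies the lower frame condition — there exists m > 0 such that m‖f‖² ≤ ∫_X |⟨ψ_x, f⟩|² dν(x) (as a value in [0, ∞]) for all f ∈ H — if and only if C is injective and has closed range in L²(X, ν). -/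
/-!
The analysis operator `C` is closed: if `fₙ → f` in `H` and `C fₙ → F` in `L²`, a subsequence of
`C fₙ` converges to `F` a.e., while `⟪ψ x, fₙ⟫ → ⟪ψ x, f⟫` for every `x`, so `F = C f`. Hence the
graph of `C` is a Banach space, and its projection to `L²` is a bounded operator with the same
injectivity and range as `C`. By the open mapping theorem, an injective bounded operator between
Banach spaces has closed range iff it is bounded below, and on the graph this is the bound
`c ‖f‖ ≤ ‖C f‖` on `Dom(C)`. Off `Dom(C)` the frame integral is infinite (the coefficients being
measurable), so the lower frame condition is exactly this bound.
-/

open MeasureTheory Filter Topology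
open scoped ComplexInnerProductSpace ENNReal NNReal

lemma exists_pos_mul_sq_le_iff {ι : Type*} {a b : ι → ℝ} (ha : ∀ i, 0 ≤ a i)
    (hb : ∀ i, 0 ≤ b i) :
    (∃ m > 0, ∀ i, m * a i ^ 2 ≤ b i ^ 2) ↔ ∃ c > 0, ∀ i, c * a i ≤ b i := by
  constructor
  · rintro ⟨m, hm, h⟩
    refine ⟨√m, Real.sqrt_pos.2 hm, fun i => ?_⟩
    have hi : (√m * a i) ^ 2 ≤ b i ^ 2 := by rw [mul_pow, Real.sq_sqrt hm.le]; exact h i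
    exact (pow_le_pow_iff_left₀ (by have := ha i; positivity) (hb i) two_ne_zero).1 hi
  · rintro ⟨c, hc, h⟩
    refine ⟨c ^ 2, by positivity, fun i => ?_⟩
    rw [← mul_pow]
    exact pow_le_pow_left₀ (by have := ha i; positivity) (h i) 2

section LTwo

variable {α E : Type*} [MeasurableSpace α] {μ : Measure α} [NormedAddCommGroup E] {f : α → E}

lemma eLpNorm_two_sq (f : α → E) : eLpNorm f 2 μ ^ 2 = ∫⁻ x, ‖f x‖ₑ ^ 2 ∂μ := by
  simpa using eLpNorm_nnreal_pow_eq_lintegral (f := f) (p := 2) (μ := μ) two_ne_zero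

lemma MeasureTheory.MemLp.lintegral_enorm_sq (hf : MemLp f 2 μ) :
    ∫⁻ x, ‖f x‖ₑ ^ 2 ∂μ = ENNReal.ofReal (‖hf.toLp f‖ ^ 2) := by
  rw [← eLpNorm_two_sq, Lp.norm_toLp, ENNReal.ofReal_pow ENNReal.toReal_nonneg,
    ENNReal.ofReal_toReal hf.eLpNorm_ne_top]

lemma lintegral_enorm_sq_eq_top (hf : AEStronglyMeasurable f μ) (h : ¬MemLp f 2 μ) :
    ∫⁻ x, ‖f x‖ₑ ^ 2 ∂μ = ∞ := by
  have : eLpNorm f 2 μ = ∞ := by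
    by_contra hne
    exact h ⟨hf, lt_top_iff_ne_top.2 hne⟩
  rw [← eLpNorm_two_sq, this, ENNReal.top_pow two_ne_zero]

end LTwo

theorem MeasureTheory.TendstoInMeasure.ae_eq_of_tendsto {α ι E : Type*} [MeasurableSpace α]
    {μ : Measure α} [EMetricSpace E] {u : Filter ι} [u.NeBot] [u.IsCountablyGenerated]
    {f : ι → α → E} {g h : α → E} (hfg : TendstoInMeasure μ f u g)
    (hfh : ∀ x, Tendsto (fun i => f i x) u (𝓝 (h x))) : h =ᵐ[μ] g := by
  obtain ⟨ns, hns, hae⟩ := hfg.exists_seq_tendsto_ae'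
  filter_upwards [hae] with x hx
  exact tendsto_nhds_unique ((hfh x).comp hns) hx

namespace LinearPMap

variable {𝕜 E F : Type*} [NontriviallyNormedField 𝕜] [NormedAddCommGroup E] [NormedSpace 𝕜 E]
  [NormedAddCommGroup F] [NormedSpace 𝕜 F] (T : E →ₗ.[𝕜] F)

def graphSnd : T.graph →L[𝕜] F := (ContinuousLinearMap.snd 𝕜 E F).comp T.graph.subtypeL

lemma range_graphSnd : Set.range T.graphSnd = Set.range T := by
  ext y
  simp [graphSnd]

lemma injective_graphSnd_iff : Function.Injective T.graphSnd ↔ Function.Injective T := by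
  change _ ↔ Function.Injective T.toFun
  rw [injective_iff_map_eq_zero, injective_iff_map_eq_zero]
  constructor
  · intro h x hx
    have := h ⟨_, T.mem_graph x⟩ hx
    exact Subtype.ext (congrArg (fun p : T.graph => (p : E × F).1) this)
  · rintro h ⟨⟨_, _⟩, hp⟩ hp0
    obtain ⟨x, rfl, rfl⟩ := T.mem_graph_iff.1 hp
    have := h x hp0
    simp_all

lemma exists_antilipschitzWith_graphSnd_iff :
    (∃ K, AntilipschitzWith K T.graphSnd) ↔ ∃ c > 0, ∀ x : T.domain, c * ‖(x : E)‖ ≤ ‖T x‖ := by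
  constructor
  · rintro ⟨K, hK⟩
    refine ⟨(K + 1 : ℝ)⁻¹, by positivity, fun x => ?_⟩
    have hx : ‖(x : E)‖ ≤ K * ‖T x‖ :=
      (norm_fst_le _).trans (T.graphSnd.bound_of_antilipschitz hK ⟨_, T.mem_graph x⟩)
    rw [inv_mul_le_iff₀ (by positivity)]
    nlinarith [norm_nonneg (T x)]
  · rintro ⟨c, hc, hT⟩
    refine ⟨⟨max c⁻¹ 1, by positivity⟩, T.graphSnd.antilipschitz_of_bound ?_⟩
    rintro ⟨⟨_, _⟩, hp⟩
    obtain ⟨x, rfl, rfl⟩ := T.mem_graph_iff.1 hp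
    change max ‖(x : E)‖ ‖T x‖ ≤ max c⁻¹ 1 * ‖T x‖
    refine max_le ?_ ?_
    · calc ‖(x : E)‖ ≤ c⁻¹ * ‖T x‖ := by rw [le_inv_mul_iff₀ hc]; exact hT x
        _ ≤ _ := by gcongr; exact le_max_left _ _
    · exact le_mul_of_one_le_left (norm_nonneg _) (le_max_right _ _)

theorem IsClosed.exists_pos_mul_norm_le_iff [CompleteSpace E] [CompleteSpace F]
    (hT : T.IsClosed) :
    (∃ c > 0, ∀ x : T.domain, c * ‖(x : E)‖ ≤ ‖T x‖) ↔
      Function.Injective T ∧ _root_.IsClosed (Set.range T) := by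
  have : CompleteSpace T.graph := hT.completeSpace_coe
  rw [← exists_antilipschitzWith_graphSnd_iff, ← injective_graphSnd_iff, ← range_graphSnd]
  constructor
  · rintro ⟨K, hK⟩
    exact ⟨hK.injective,
      (T.graphSnd.isClosed_range_iff_antilipschitz_of_injective hK.injective).2 ⟨K, hK⟩⟩
  · rintro ⟨hinj, hclosed⟩
    exact T.graphSnd.antilipschitz_of_injective_of_isClosed_range hinj hclosed

end LinearPMap

section AnalysisOperator

variable (𝕜 : Type*) {H X : Type*} [RCLike 𝕜] [NormedAddCommGroup H] [InnerProductSpace 𝕜 H]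
  [MeasurableSpace X] (ψ : X → H) (p : ℝ≥0∞) (ν : Measure X)

def analysisDomain : Submodule 𝕜 H where
  carrier := {f | MemLp (fun x => inner 𝕜 (ψ x) f) p ν}
  add_mem' {f g} hf hg := by
    simp only [Set.mem_ofPred_eq, inner_add_right]
    exact hf.add hg
  zero_mem' := by
    simp only [Set.mem_ofPred_eq, inner_zero_right]
    exact MemLp.zero
  smul_mem' c f hf := by
    simp only [Set.mem_ofPred_eq, inner_smul_right]
    exact hf.const_mul c

variable {𝕜 ψ p ν} in
lemma mem_analysisDomain {f : H} :
    f ∈ analysisDomain 𝕜 ψ p ν ↔ MemLp (fun x => inner 𝕜 (ψ x) f) p ν :=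
  Iff.rfl

def analysisOperator : H →ₗ.[𝕜] Lp 𝕜 p ν where
  domain := analysisDomain 𝕜 ψ p ν
  toFun :=
    { toFun f := (mem_analysisDomain.1 f.2).toLp
      map_add' f g :=
        (MemLp.toLp_congr _ _ (.of_forall fun x => inner_add_right _ _ _)).trans
          (MemLp.toLp_add _ _)
      map_smul' c f := by
        rw [RingHom.id_apply]
        exact (MemLp.toLp_congr _ _ (.of_forall fun x => inner_smul_right _ _ _)).trans
          (MemLp.toLp_const_smul c (mem_analysisDomain.1 f.2)) }

variable {𝕜 ψ p ν} in
lemma coeFn_analysisOperator (f : (analysisOperator 𝕜 ψ p ν).domain) :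
    analysisOperator 𝕜 ψ p ν f =ᵐ[ν] fun x => inner 𝕜 (ψ x) (f : H) :=
  MemLp.coeFn_toLp (mem_analysisDomain.1 f.2)

lemma range_analysisOperator :
    Set.range (analysisOperator 𝕜 ψ p ν) =
      {F | ∃ (f : H) (hf : MemLp (fun x => inner 𝕜 (ψ x) f) p ν), F = hf.toLp _} := by
  ext F
  constructor
  · rintro ⟨⟨f, hf⟩, rfl⟩
    exact ⟨f, hf, rfl⟩
  · rintro ⟨f, hf, rfl⟩
    exact ⟨⟨f, hf⟩, rfl⟩

lemma injective_analysisOperator_iff :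
    Function.Injective (analysisOperator 𝕜 ψ p ν) ↔
      ∀ f g : H, MemLp (fun x => inner 𝕜 (ψ x) f) p ν → MemLp (fun x => inner 𝕜 (ψ x) g) p ν →
        (fun x => inner 𝕜 (ψ x) f) =ᵐ[ν] (fun x => inner 𝕜 (ψ x) g) → f = g := by
  constructor
  · intro h f g hf hg hfg
    exact congrArg Subtype.val (@h ⟨f, hf⟩ ⟨g, hg⟩ ((MemLp.toLp_eq_toLp_iff hf hg).2 hfg))
  · rintro h ⟨f, hf⟩ ⟨g, hg⟩ hfg
    exact Subtype.ext (h f g hf hg ((MemLp.toLp_eq_toLp_iff hf hg).1 hfg))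

lemma isClosed_analysisOperator [Fact (1 ≤ p)] : (analysisOperator 𝕜 ψ p ν).IsClosed := by
  refine IsSeqClosed.isClosed fun q ⟨f, F⟩ hq hlim => ?_
  choose g hg₁ hg₂ using fun n => (analysisOperator 𝕜 ψ p ν).mem_graph_iff.1 (hq n)
  have hfst : Tendsto (fun n => (g n : H)) atTop (𝓝 f) := by
    simpa only [hg₁] using hlim.fst_nhds
  have hsnd : Tendsto (fun n => analysisOperator 𝕜 ψ p ν (g n)) atTop (𝓝 F) := by
    simpa only [hg₂] using hlim.snd_nhds
  have hae : (fun x => inner 𝕜 (ψ x) f) =ᵐ[ν] F :=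
    ((tendstoInMeasure_of_tendsto_Lp hsnd).congr_left fun n => coeFn_analysisOperator (g n)
      ).ae_eq_of_tendsto fun x => ((continuous_const.inner continuous_id).tendsto f).comp hfst
  have hf : f ∈ (analysisOperator 𝕜 ψ p ν).domain := (Lp.memLp F).ae_eq hae.symm
  exact (analysisOperator 𝕜 ψ p ν).mem_graph_iff.2
    ⟨⟨f, hf⟩, rfl, Lp.ext ((coeFn_analysisOperator _).trans hae)⟩

lemma exists_lower_frame_bound_iff
    (hmeas : ∀ f, AEStronglyMeasurable (fun x => inner 𝕜 (ψ x) f) ν) :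
    (∃ m > 0, ∀ f : H, ENNReal.ofReal (m * ‖f‖ ^ 2) ≤ ∫⁻ x, ‖inner 𝕜 (ψ x) f‖ₑ ^ 2 ∂ν) ↔
      ∃ c > 0, ∀ f : (analysisOperator 𝕜 ψ 2 ν).domain,
        c * ‖(f : H)‖ ≤ ‖analysisOperator 𝕜 ψ 2 ν f‖ := by
  rw [← exists_pos_mul_sq_le_iff (fun _ => norm_nonneg _) fun _ => norm_nonneg _]
  refine exists_congr fun m => and_congr_right fun hm => ⟨fun h f => ?_, fun h f => ?_⟩
  · have hf := h f
    rwa [(mem_analysisDomain.1 f.2).lintegral_enorm_sq,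
      ENNReal.ofReal_le_ofReal_iff (sq_nonneg _)] at hf
  · by_cases hf : MemLp (fun x => inner 𝕜 (ψ x) f) 2 ν
    · rw [hf.lintegral_enorm_sq]
      exact ENNReal.ofReal_le_ofReal (h ⟨f, hf⟩)
    · rw [lintegral_enorm_sq_eq_top (hmeas f) hf]
      exact le_top

end AnalysisOperator

theorem lower_frame_condition_iff_injective_closed_range_general
    {H : Type*} [NormedAddCommGroup H] [InnerProductSpace ℂ H] [CompleteSpace H]
    {X : Type*} [MeasurableSpace X] (ν : Measure X)
    (ψ : X → H)
    (hmeas : ∀ f : H, AEMeasurable (fun x => ⟪ψ x, f⟫) ν) :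
    (∃ m : ℝ, 0 < m ∧ ∀ f : H,
        ENNReal.ofReal (m * ‖f‖ ^ 2) ≤ ∫⁻ x, (‖⟪ψ x, f⟫‖₊ : ℝ≥0∞) ^ 2 ∂ν) ↔
      ((∀ f g : H, MemLp (fun x => ⟪ψ x, f⟫) 2 ν → MemLp (fun x => ⟪ψ x, g⟫) 2 ν →
          (fun x => ⟪ψ x, f⟫) =ᵐ[ν] (fun x => ⟪ψ x, g⟫) → f = g) ∧
        IsClosed {F : Lp ℂ 2 ν |
          ∃ (f : H) (hf : MemLp (fun x => ⟪ψ x, f⟫) 2 ν),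
            F = hf.toLp (fun x => ⟪ψ x, f⟫)}) := by
  refine (exists_lower_frame_bound_iff ℂ ψ ν fun f => (hmeas f).aestronglyMeasurable).trans ?_
  rw [(isClosed_analysisOperator ℂ ψ 2 ν).exists_pos_mul_norm_le_iff,
    injective_analysisOperator_iff, range_analysisOperator]

/-- For a total family `ψ : X → H` with measurable coefficient functions,
the lower frame condition holds if and only if the analysis operator `C`
(with domain `{f | (fun x => ⟪ψ x, f⟫) ∈ L²(X, ν)}`) is injective and has closed range. -/
theorem lower_frame_condition_iff_injective_closed_range
    {H : Type*} [NormedAddCommGroup H] [InnerProductSpace ℂ H] [CompleteSpace H]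
    {X : Type*} [MeasurableSpace X] (ν : Measure X)
    (ψ : X → H)
    (hmeas : ∀ f : H, AEMeasurable (fun x => ⟪ψ x, f⟫) ν)
    (htotal : (Submodule.span ℂ (Set.range ψ)).topologicalClosure = ⊤) :
    (∃ m : ℝ, 0 < m ∧ ∀ f : H,
        ENNReal.ofReal (m * ‖f‖ ^ 2) ≤ ∫⁻ x, (‖⟪ψ x, f⟫‖₊ : ℝ≥0∞) ^ 2 ∂ν) ↔
      ((∀ f g : H, MemLp (fun x => ⟪ψ x, f⟫) 2 ν → MemLp (fun x => ⟪ψ x, g⟫) 2 ν →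
          (fun x => ⟪ψ x, f⟫) =ᵐ[ν] (fun x => ⟪ψ x, g⟫) → f = g) ∧
        IsClosed {F : Lp ℂ 2 ν |
          ∃ (f : H) (hf : MemLp (fun x => ⟪ψ x, f⟫) 2 ν),
            F = hf.toLp (fun x => ⟪ψ x, f⟫)}) :=
  lower_frame_condition_iff_injective_closed_range_general ν ψ hmeas
end

section
/- Let X be a σ-compact locally compact Hausdorff space, ν a Borel measure on X that is finite on compact sets (with X the countable union of an increasing family of relatively compact sets covering X up to ν-null sets), H a complex Hilbert space, and ψ : X → H a total family such that for every f ∈ H the function x ↦ ⟨ψ_x, f⟩ is ν-measurable and locally ν-integrable. Define the synthesis operator D with domain Dom(D) = {F ∈ L²(X, ν) : there exists g ∈ H such that for every f ∈ H the function x ↦ conj(F(x))·⟨ψ_x, f⟩ is ν-integrable and ∫_X conj(F(x))·⟨ψ_x, f⟩ dν(x) = ⟨g, f⟩}, with D F := g. Then Dom(D) is dense in L²(X, ν), and the adjoint of D equals the analysis operator C: Dom(D*) = Dom(C) = {f ∈ H : x ↦ ⟨ψ_x, f⟩ ∈ L²(X, ν)} and D* f = C f for every f ∈ Dom(C). -/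
/-!
For a compact set `K`, the coefficient functions of `ψ` are integrable on `K`, so by the closed
graph theorem `f ↦ ∫_K ⟪ψ x, f⟫ dν` is a bounded functional and the indicator `𝟙_K` lies in the
domain of the synthesis operator, with `⟪D 𝟙_K, f⟫ = ∫_K ⟪ψ x, f⟫ dν`. Testing a vector orthogonal
to `Dom(D)`, or the defining identity of `D*`, against these indicators shows that two locally
integrable functions have the same integral over every compact set, hence agree almost everywhere
on the σ-compact space `X`. This gives both the density of `Dom(D)` and `D* = C`.
-/

open MeasureTheory Filter Topology ComplexConjugate
open scoped ComplexInnerProductSpace ENNReal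

section Synthesis

variable {X : Type*} [MeasurableSpace X] {H : Type*} [NormedAddCommGroup H] [InnerProductSpace ℂ H]

/-- `IsWeakSynthesis ν ψ F g` says that `g = D F` for the weakly defined synthesis operator `D`. -/
def IsWeakSynthesis (ν : Measure X) (ψ : X → H) (F : X → ℂ) (g : H) : Prop :=
  ∀ f : H, Integrable (fun x => conj (F x) * ⟪ψ x, f⟫) ν ∧
    ∫ x, conj (F x) * ⟪ψ x, f⟫ ∂ν = ⟪g, f⟫

/-- `IsSynthesisAdjoint ν ψ f h` says that `f ∈ Dom(D*)` with `D* f = h`. -/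
def IsSynthesisAdjoint (ν : Measure X) (ψ : X → H) (f : H) (h : Lp ℂ 2 ν) : Prop :=
  ∀ (F : Lp ℂ 2 ν) (g : H), IsWeakSynthesis ν ψ F g → ⟪h, F⟫ = ⟪f, g⟫

namespace IsWeakSynthesis

variable {ν : Measure X} {ψ : X → H} {F G : X → ℂ} {g g' : H}

lemma congr_ae (hF : IsWeakSynthesis ν ψ F g) (hFG : F =ᵐ[ν] G) : IsWeakSynthesis ν ψ G g := by
  intro f
  have hae : (fun x => conj (F x) * ⟪ψ x, f⟫) =ᵐ[ν] fun x => conj (G x) * ⟪ψ x, f⟫ := by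
    filter_upwards [hFG] with x hx
    rw [hx]
  exact ⟨(hF f).1.congr hae, (integral_congr_ae hae).symm.trans (hF f).2⟩

lemma zero : IsWeakSynthesis ν ψ 0 0 := fun f => by simp

lemma add (hF : IsWeakSynthesis ν ψ F g) (hG : IsWeakSynthesis ν ψ G g') :
    IsWeakSynthesis ν ψ (F + G) (g + g') := by
  intro f
  simp only [Pi.add_apply, map_add, add_mul, inner_add_left]
  exact ⟨(hF f).1.add (hG f).1, by rw [integral_add (hF f).1 (hG f).1, (hF f).2, (hG f).2]⟩

lemma const_smul (c : ℂ) (hF : IsWeakSynthesis ν ψ F g) :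
    IsWeakSynthesis ν ψ (c • F) (c • g) := by
  intro f
  simp only [Pi.smul_apply, smul_eq_mul, map_mul, mul_assoc, inner_smul_left]
  exact ⟨(hF f).1.const_mul _, by rw [integral_const_mul, (hF f).2]⟩

end IsWeakSynthesis

def synthesisDomain (ν : Measure X) (ψ : X → H) : Submodule ℂ (Lp ℂ 2 ν) where
  carrier := {F | ∃ g, IsWeakSynthesis ν ψ F g}
  zero_mem' := ⟨0, IsWeakSynthesis.zero.congr_ae (Lp.coeFn_zero ℂ 2 ν).symm⟩
  add_mem' := fun ⟨g, hg⟩ ⟨g', hg'⟩ => ⟨g + g', (hg.add hg').congr_ae (Lp.coeFn_add _ _).symm⟩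
  smul_mem' := fun c _ ⟨g, hg⟩ => ⟨c • g, (hg.const_smul c).congr_ae (Lp.coeFn_smul _ _).symm⟩

section WeakIntegral

variable {μ : Measure X} {ψ : X → H}

noncomputable def analysisL1 (hψ : ∀ f : H, Integrable (fun x => ⟪ψ x, f⟫) μ) :
    H →ₗ[ℂ] Lp ℂ 1 μ where
  toFun f := (hψ f).toL1 _
  map_add' f f' := by simp only [inner_add_right]; rfl
  map_smul' c f := by simp only [inner_smul_right]; rfl

lemma continuous_analysisL1 [CompleteSpace H] (hψ : ∀ f : H, Integrable (fun x => ⟪ψ x, f⟫) μ) :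
    Continuous (analysisL1 hψ) := by
  refine (analysisL1 hψ).continuous_of_seq_closed_graph fun u f F hu hTu => ?_
  obtain ⟨ns, hns, hae⟩ := (tendstoInMeasure_of_tendsto_Lp hTu).exists_seq_tendsto_ae
  have hcoe : ∀ᵐ x ∂μ, ∀ n, analysisL1 hψ (u n) x = ⟪ψ x, u n⟫ :=
    ae_all_iff.2 fun n => (hψ (u n)).coeFn_toL1
  refine Lp.ext ?_
  filter_upwards [hae, hcoe, (hψ f).coeFn_toL1] with x hx hxu hxf
  refine hxf.symm ▸ tendsto_nhds_unique hx ?_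
  simp only [Function.comp_apply, hxu]
  exact tendsto_const_nhds.inner (hu.comp hns.tendsto_atTop)

lemma exists_integral_inner_eq_inner [CompleteSpace H]
    (hψ : ∀ f : H, Integrable (fun x => ⟪ψ x, f⟫) μ) :
    ∃ g : H, ∀ f : H, ∫ x, ⟪ψ x, f⟫ ∂μ = ⟪g, f⟫ := by
  let φ : H →L[ℂ] ℂ := (L1.integralCLM' ℂ).comp ⟨analysisL1 hψ, continuous_analysisL1 hψ⟩
  refine ⟨(InnerProductSpace.toDual ℂ H).symm φ, fun f => ?_⟩
  rw [InnerProductSpace.toDual_symm_apply, integral_eq _ (hψ f), L1.integral_eq' ℂ]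
  rfl

end WeakIntegral

section Indicator

variable {ν : Measure X} {ψ : X → H} {s : Set X}

lemma isWeakSynthesis_indicatorConstLp_one_iff (hs : MeasurableSet s) (hνs : ν s ≠ ∞) {g : H} :
    IsWeakSynthesis ν ψ (indicatorConstLp 2 hs hνs (1 : ℂ)) g ↔
      ∀ f, IntegrableOn (fun x => ⟪ψ x, f⟫) s ν ∧ ∫ x in s, ⟪ψ x, f⟫ ∂ν = ⟪g, f⟫ := by
  refine forall_congr' fun f => ?_
  have hae : (fun x => conj (indicatorConstLp 2 hs hνs (1 : ℂ) x) * ⟪ψ x, f⟫)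
      =ᵐ[ν] s.indicator fun x => ⟪ψ x, f⟫ := by
    filter_upwards [indicatorConstLp_coeFn (p := 2) (hs := hs) (hμs := hνs) (c := (1 : ℂ))]
      with x hx
    by_cases hxs : x ∈ s <;> simp [hx, hxs]
  rw [integrable_congr hae, integral_congr_ae hae, integrable_indicator_iff hs,
    integral_indicator hs]

lemma exists_isWeakSynthesis_indicatorConstLp_one [CompleteSpace H] (hs : MeasurableSet s)
    (hνs : ν s ≠ ∞) (hψs : ∀ f : H, IntegrableOn (fun x => ⟪ψ x, f⟫) s ν) :
    ∃ g, IsWeakSynthesis ν ψ (indicatorConstLp 2 hs hνs (1 : ℂ)) g :=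
  let ⟨g, hg⟩ := exists_integral_inner_eq_inner hψs
  ⟨g, (isWeakSynthesis_indicatorConstLp_one_iff hs hνs).2 fun f => ⟨hψs f, hg f⟩⟩

end Indicator

lemma isSynthesisAdjoint_toLp {ν : Measure X} {ψ : X → H} {f : H}
    (hf : MemLp (fun x => ⟪ψ x, f⟫) 2 ν) : IsSynthesisAdjoint ν ψ f (hf.toLp _) := by
  intro F g hg
  rw [← inner_conj_symm f g, ← (hg f).2, ← integral_conj, L2.inner_def]
  refine integral_congr_ae ?_
  filter_upwards [hf.coeFn_toLp] with x hx
  simp [hx, mul_comm]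

section LocallyCompact

variable [TopologicalSpace X] [T2Space X] [LocallyCompactSpace X] [SigmaCompactSpace X]
  [BorelSpace X] {ν : Measure X} [IsFiniteMeasureOnCompacts ν] [CompleteSpace H] {ψ : X → H}

lemma dense_synthesisDomain
    (hloc : ∀ (f : H) (K : Set X), IsCompact K → IntegrableOn (fun x => ⟪ψ x, f⟫) K ν) :
    Dense (synthesisDomain ν ψ : Set (Lp ℂ 2 ν)) := by
  rw [Submodule.dense_iff_topologicalClosure_eq_top, Submodule.topologicalClosure_eq_top_iff,
    Submodule.eq_bot_iff]
  intro G hG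
  have hG_int : ∀ K, IsCompact K → ∫ x in K, G x ∂ν = 0 := by
    intro K hK
    obtain ⟨g, hg⟩ := exists_isWeakSynthesis_indicatorConstLp_one hK.measurableSet
      hK.measure_lt_top.ne (hloc · K hK)
    rw [← L2.inner_indicatorConstLp_one hK.measurableSet hK.measure_lt_top.ne]
    exact hG _ ⟨g, hg⟩
  exact Lp.eq_zero_iff_ae_eq_zero.2 <| ae_eq_zero_of_forall_setIntegral_isCompact_eq_zero'
    ((Lp.memLp G).locallyIntegrable one_le_two) hG_int

lemma IsSynthesisAdjoint.coeFn_ae_eq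
    (hloc : ∀ (f : H) (K : Set X), IsCompact K → IntegrableOn (fun x => ⟪ψ x, f⟫) K ν)
    {f : H} {h : Lp ℂ 2 ν} (hh : IsSynthesisAdjoint ν ψ f h) :
    h =ᵐ[ν] fun x => ⟪ψ x, f⟫ := by
  have hh_loc : LocallyIntegrable h ν := (Lp.memLp h).locallyIntegrable one_le_two
  have hint : ∀ K, IsCompact K → ∫ x in K, (h x - ⟪ψ x, f⟫) ∂ν = 0 := by
    intro K hK
    have hKm : MeasurableSet K := hK.measurableSet
    have hKν : ν K ≠ ∞ := hK.measure_lt_top.ne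
    obtain ⟨g, hg⟩ := exists_isWeakSynthesis_indicatorConstLp_one hKm hKν (hloc · K hK)
    have h_int : ∫ x in K, h x ∂ν = conj ⟪h, indicatorConstLp 2 hKm hKν (1 : ℂ)⟫ := by
      rw [inner_conj_symm, L2.inner_indicatorConstLp_one]
    have hψ_int : ∫ x in K, ⟪ψ x, f⟫ ∂ν = conj ⟪f, g⟫ := by
      rw [inner_conj_symm, ((isWeakSynthesis_indicatorConstLp_one_iff hKm hKν).1 hg f).2]
    rw [integral_sub (hh_loc.integrableOn_isCompact hK) (hloc f K hK), h_int, hψ_int,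
      hh _ _ hg, sub_self]
  filter_upwards [ae_eq_zero_of_forall_setIntegral_isCompact_eq_zero'
    (hh_loc.sub (locallyIntegrable_iff.2 (hloc f))) hint] with x hx
  exact sub_eq_zero.1 hx

end LocallyCompact

end Synthesis

theorem synthesis_densely_defined_and_adjoint_eq_analysis_general
    {X : Type*} [TopologicalSpace X] [T2Space X] [LocallyCompactSpace X] [SigmaCompactSpace X]
    [MeasurableSpace X] [BorelSpace X] (ν : Measure X) [IsFiniteMeasureOnCompacts ν]
    {H : Type*} [NormedAddCommGroup H] [InnerProductSpace ℂ H] [CompleteSpace H]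
    (ψ : X → H)
    (hloc : ∀ (f : H) (K : Set X), IsCompact K →
      IntegrableOn (fun x => ⟪ψ x, f⟫) K ν) :
    -- Dom(D) is dense in L²(X, ν)
    Dense {F : Lp ℂ 2 ν | ∃ g : H, ∀ f : H,
        Integrable (fun x => (starRingEnd ℂ) (F x) * ⟪ψ x, f⟫) ν ∧
        ∫ x, (starRingEnd ℂ) (F x) * ⟪ψ x, f⟫ ∂ν = ⟪g, f⟫} ∧
    -- Dom(D*) = Dom(C) and D* f = C f
    ∀ f : H,
      ((∃ h : Lp ℂ 2 ν, ∀ (F : Lp ℂ 2 ν) (g : H),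
          (∀ f' : H, Integrable (fun x => (starRingEnd ℂ) (F x) * ⟪ψ x, f'⟫) ν ∧
            ∫ x, (starRingEnd ℂ) (F x) * ⟪ψ x, f'⟫ ∂ν = ⟪g, f'⟫) →
          ⟪h, F⟫ = ⟪f, g⟫) ↔
        MemLp (fun x => ⟪ψ x, f⟫) 2 ν) ∧
      ∀ (hf : MemLp (fun x => ⟪ψ x, f⟫) 2 ν) (h : Lp ℂ 2 ν),
        (∀ (F : Lp ℂ 2 ν) (g : H),
          (∀ f' : H, Integrable (fun x => (starRingEnd ℂ) (F x) * ⟪ψ x, f'⟫) ν ∧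
            ∫ x, (starRingEnd ℂ) (F x) * ⟪ψ x, f'⟫ ∂ν = ⟪g, f'⟫) →
          ⟪h, F⟫ = ⟪f, g⟫) →
        h = hf.toLp (fun x => ⟪ψ x, f⟫) := by
  refine ⟨dense_synthesisDomain hloc, fun f => ⟨⟨?_, ?_⟩, ?_⟩⟩
  · rintro ⟨h, hh⟩
    exact (Lp.memLp h).ae_eq (IsSynthesisAdjoint.coeFn_ae_eq hloc hh)
  · exact fun hf => ⟨hf.toLp _, isSynthesisAdjoint_toLp hf⟩
  · exact fun hf h hh =>
      Lp.ext ((IsSynthesisAdjoint.coeFn_ae_eq hloc hh).trans hf.coeFn_toLp.symm)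

/-- Let `X` be a σ-compact locally compact Hausdorff space with a Borel
measure `ν` finite on compacts, and `ψ : X → H` a total family whose coefficient functions
are measurable and locally integrable.  Then the weakly defined synthesis operator `D` is
densely defined, and its adjoint is the analysis operator `C`:  a vector `f ∈ H` satisfies
the defining property of `Dom(D*)` iff its coefficient function lies in `L²(X, ν)`, and in
that case the adjoint vector is exactly `C f`. -/
theorem synthesis_densely_defined_and_adjoint_eq_analysis
    {X : Type*} [TopologicalSpace X] [T2Space X] [LocallyCompactSpace X] [SigmaCompactSpace X]
    [MeasurableSpace X] [BorelSpace X] (ν : Measure X) [IsFiniteMeasureOnCompacts ν]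
    {H : Type*} [NormedAddCommGroup H] [InnerProductSpace ℂ H] [CompleteSpace H]
    (ψ : X → H)
    (hmeas : ∀ f : H, AEMeasurable (fun x => ⟪ψ x, f⟫) ν)
    (hloc : ∀ (f : H) (K : Set X), IsCompact K →
      IntegrableOn (fun x => ⟪ψ x, f⟫) K ν)
    (htotal : (Submodule.span ℂ (Set.range ψ)).topologicalClosure = ⊤) :
    -- Dom(D) is dense in L²(X, ν)
    Dense {F : Lp ℂ 2 ν | ∃ g : H, ∀ f : H,
        Integrable (fun x => (starRingEnd ℂ) (F x) * ⟪ψ x, f⟫) ν ∧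
        ∫ x, (starRingEnd ℂ) (F x) * ⟪ψ x, f⟫ ∂ν = ⟪g, f⟫} ∧
    -- Dom(D*) = Dom(C) and D* f = C f
    ∀ f : H,
      ((∃ h : Lp ℂ 2 ν, ∀ (F : Lp ℂ 2 ν) (g : H),
          (∀ f' : H, Integrable (fun x => (starRingEnd ℂ) (F x) * ⟪ψ x, f'⟫) ν ∧
            ∫ x, (starRingEnd ℂ) (F x) * ⟪ψ x, f'⟫ ∂ν = ⟪g, f'⟫) →
          ⟪h, F⟫ = ⟪f, g⟫) ↔
        MemLp (fun x => ⟪ψ x, f⟫) 2 ν) ∧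
      ∀ (hf : MemLp (fun x => ⟪ψ x, f⟫) 2 ν) (h : Lp ℂ 2 ν),
        (∀ (F : Lp ℂ 2 ν) (g : H),
          (∀ f' : H, Integrable (fun x => (starRingEnd ℂ) (F x) * ⟪ψ x, f'⟫) ν ∧
            ∫ x, (starRingEnd ℂ) (F x) * ⟪ψ x, f'⟫ ∂ν = ⟪g, f'⟫) →
          ⟪h, F⟫ = ⟪f, g⟫) →
        h = hf.toLp (fun x => ⟪ψ x, f⟫) :=
  synthesis_densely_defined_and_adjoint_eq_analysis_general ν ψ hloc
end

section
/- Let H be a complex Hilbert space and (X, ν) a measure space. Let ψ : X → H be an upper semi-frame with upper frame bound M, i.e. ψ is total, x ↦ ⟨ψ_x, f⟩ is ν-measurable for all f, and 0 < ∫_X |⟨ψ_x, f⟩|² dν(x) ≤ M‖f‖² for all f ≠ 0. Let φ : X → H be a total family with ν-measurable coefficient functions that is dual to ψ in the weak sense: for all f, g ∈ H the function x ↦ ⟨g, ψ_x⟩⟨φ_x, f⟩ is ν-integrable and ∫_X ⟨g, ψ_x⟩⟨φ_x, f⟩ dν(x) = ⟨g, f⟩. Then φ is a lower semi-frame with lower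 frame bound M⁻¹: for all f ∈ H, M⁻¹‖f‖² ≤ ∫_X |⟨φ_x, f⟩|² dν(x) (as a value in [0, ∞]). -/
open MeasureTheory
open scoped ComplexInnerProductSpace ENNReal

/-! Testing the duality `∫ ⟪f, ψ x⟫ ⟪φ x, f⟫ dν = ‖f‖²` against `f` itself and applying the
Cauchy–Schwarz inequality in `L²(ν)` gives `‖f‖⁴ ≤ (∫ |⟪ψ x, f⟫|²) (∫ |⟪φ x, f⟫|²)`;
the upper bound `∫ |⟪ψ x, f⟫|² ≤ M ‖f‖²` then leaves `‖f‖² / M ≤ ∫ |⟪φ x, f⟫|²`. -/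

theorem ENNReal.lintegral_mul_sq_le {α : Type*} [MeasurableSpace α] {μ : Measure α}
    {f g : α → ℝ≥0∞} (hf : AEMeasurable f μ) (hg : AEMeasurable g μ) :
    (∫⁻ a, f a * g a ∂μ) ^ 2 ≤ (∫⁻ a, f a ^ 2 ∂μ) * ∫⁻ a, g a ^ 2 ∂μ := by
  have holder := ENNReal.lintegral_mul_le_Lp_mul_Lq μ Real.HolderConjugate.two_two hf hg
  simp only [Pi.mul_apply, ENNReal.rpow_two] at holder
  calc (∫⁻ a, f a * g a ∂μ) ^ 2
      ≤ ((∫⁻ a, f a ^ 2 ∂μ) ^ (1 / 2 : ℝ) * (∫⁻ a, g a ^ 2 ∂μ) ^ (1 / 2 : ℝ)) ^ 2 := by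
        gcongr
    _ = (∫⁻ a, f a ^ 2 ∂μ) * ∫⁻ a, g a ^ 2 ∂μ := by
        rw [mul_pow, ← ENNReal.rpow_mul_natCast, ← ENNReal.rpow_mul_natCast]
        norm_num

theorem ENNReal.inv_mul_le_of_sq_le_mul {r a b m : ℝ≥0∞} (hr₀ : r ≠ 0) (hr : r ≠ ∞)
    (hab : r ^ 2 ≤ a * b) (ha : a ≤ m * r) : m⁻¹ * r ≤ b := by
  have hrb : r * r ≤ r * (b * m) :=
    calc r * r = r ^ 2 := (sq r).symm
      _ ≤ a * b := hab
      _ ≤ m * r * b := by gcongr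
      _ = r * (b * m) := by ring
  rw [mul_comm, ← div_eq_mul_inv]
  exact ENNReal.div_le_of_le_mul ((ENNReal.mul_le_mul_iff_right hr₀ hr).mp hrb)

theorem enorm_sq_le_lintegral_of_integral_inner_mul_inner_eq {𝕜 H X : Type*} [RCLike 𝕜]
    [NormedAddCommGroup H] [InnerProductSpace 𝕜 H] [MeasurableSpace X] {ν : Measure X}
    {ψ φ : X → H} {f : H} (h : ∫ x, inner 𝕜 f (ψ x) * inner 𝕜 (φ x) f ∂ν = inner 𝕜 f f) :
    ‖f‖ₑ ^ 2 ≤ ∫⁻ x, ‖inner 𝕜 (ψ x) f‖ₑ * ‖inner 𝕜 (φ x) f‖ₑ ∂ν :=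
  calc ‖f‖ₑ ^ 2 = ‖inner 𝕜 f f‖ₑ := by
        rw [inner_self_eq_norm_sq_to_K, enorm_pow, ← ofReal_norm, ← ofReal_norm,
          RCLike.norm_ofReal, abs_norm]
    _ = ‖∫ x, inner 𝕜 f (ψ x) * inner 𝕜 (φ x) f ∂ν‖ₑ := by rw [h]
    _ ≤ ∫⁻ x, ‖inner 𝕜 f (ψ x) * inner 𝕜 (φ x) f‖ₑ ∂ν := enorm_integral_le_lintegral_enorm _
    _ = ∫⁻ x, ‖inner 𝕜 (ψ x) f‖ₑ * ‖inner 𝕜 (φ x) f‖ₑ ∂ν := by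
        simp only [enorm_mul, ← inner_conj_symm f, RCLike.enorm_conj]

theorem dual_of_upper_semiframe_is_lower_semiframe_general
    {H : Type*} [NormedAddCommGroup H] [InnerProductSpace ℂ H]
    {X : Type*} [MeasurableSpace X] (ν : Measure X)
    (ψ φ : X → H) (M : ℝ) (hM : 0 < M)
    (hψmeas : ∀ f : H, AEMeasurable (fun x => ⟪ψ x, f⟫) ν)
    (hupper : ∀ f : H, f ≠ 0 →
      0 < ∫⁻ x, (‖⟪ψ x, f⟫‖₊ : ℝ≥0∞) ^ 2 ∂ν ∧
      ∫⁻ x, (‖⟪ψ x, f⟫‖₊ : ℝ≥0∞) ^ 2 ∂ν ≤ ENNReal.ofReal (M * ‖f‖ ^ 2))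
    (hφmeas : ∀ f : H, AEMeasurable (fun x => ⟪φ x, f⟫) ν)
    (hdual : ∀ f g : H,
      Integrable (fun x => ⟪g, ψ x⟫ * ⟪φ x, f⟫) ν ∧
      ∫ x, ⟪g, ψ x⟫ * ⟪φ x, f⟫ ∂ν = ⟪g, f⟫) :
    ∀ f : H, ENNReal.ofReal (M⁻¹ * ‖f‖ ^ 2) ≤ ∫⁻ x, (‖⟪φ x, f⟫‖₊ : ℝ≥0∞) ^ 2 ∂ν := by
  intro f
  obtain rfl | hf := eq_or_ne f 0
  · simp
  have hfourth : (‖f‖ₑ ^ 2) ^ 2 ≤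
      (∫⁻ x, ‖⟪ψ x, f⟫‖ₑ ^ 2 ∂ν) * ∫⁻ x, ‖⟪φ x, f⟫‖ₑ ^ 2 ∂ν :=
    (pow_le_pow_left₀ zero_le
      (enorm_sq_le_lintegral_of_integral_inner_mul_inner_eq (hdual f f).2) 2).trans
      (ENNReal.lintegral_mul_sq_le (hψmeas f).enorm (hφmeas f).enorm)
  have hupper_f : ∫⁻ x, ‖⟪ψ x, f⟫‖ₑ ^ 2 ∂ν ≤ ENNReal.ofReal M * ‖f‖ₑ ^ 2 := by
    simpa only [ENNReal.ofReal_mul hM.le, ENNReal.ofReal_pow (norm_nonneg f), ofReal_norm,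
      enorm_eq_nnnorm] using (hupper f hf).2
  rw [ENNReal.ofReal_mul (inv_nonneg.mpr hM.le), ENNReal.ofReal_inv_of_pos hM,
    ENNReal.ofReal_pow (norm_nonneg f), ofReal_norm]
  exact ENNReal.inv_mul_le_of_sq_le_mul (by simpa using hf) (by simp) hfourth hupper_f

/-- If `ψ` is an upper semi-frame with upper frame bound `M` and `φ` is a
total family dual to `ψ` (in the weak sense), then `φ` is a lower semi-frame with lower
frame bound `M⁻¹`. -/
theorem dual_of_upper_semiframe_is_lower_semiframe
    {H : Type*} [NormedAddCommGroup H] [InnerProductSpace ℂ H] [CompleteSpace H]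
    {X : Type*} [MeasurableSpace X] (ν : Measure X)
    (ψ φ : X → H) (M : ℝ) (hM : 0 < M)
    (hψmeas : ∀ f : H, AEMeasurable (fun x => ⟪ψ x, f⟫) ν)
    (hψtotal : (Submodule.span ℂ (Set.range ψ)).topologicalClosure = ⊤)
    (hupper : ∀ f : H, f ≠ 0 →
      0 < ∫⁻ x, (‖⟪ψ x, f⟫‖₊ : ℝ≥0∞) ^ 2 ∂ν ∧
      ∫⁻ x, (‖⟪ψ x, f⟫‖₊ : ℝ≥0∞) ^ 2 ∂ν ≤ ENNReal.ofReal (M * ‖f‖ ^ 2))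
    (hφmeas : ∀ f : H, AEMeasurable (fun x => ⟪φ x, f⟫) ν)
    (hφtotal : (Submodule.span ℂ (Set.range φ)).topologicalClosure = ⊤)
    (hdual : ∀ f g : H,
      Integrable (fun x => ⟪g, ψ x⟫ * ⟪φ x, f⟫) ν ∧
      ∫ x, ⟪g, ψ x⟫ * ⟪φ x, f⟫ ∂ν = ⟪g, f⟫) :
    ∀ f : H, ENNReal.ofReal (M⁻¹ * ‖f‖ ^ 2) ≤ ∫⁻ x, (‖⟪φ x, f⟫‖₊ : ℝ≥0∞) ^ 2 ∂ν :=
  dual_of_upper_semiframe_is_lower_semiframe_general ν ψ φ M hM hψmeas hupper hφmeas hdual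
end

section
/- Let H be a complex Hilbert space, (X, ν) a measure space, and φ : X → H a family with ν-measurable coefficient functions satisfying the lower frame condition with bound m > 0: m‖f‖² ≤ ∫_X |⟨φ_x, f⟩|² dν(x) for all f ∈ H. Define the frame operator S with domain Dom(S) = {f ∈ H : there exists h ∈ H such that for every g ∈ H the function x ↦ ⟨g, φ_x⟩⟨φ_x, f⟩ is ν-integrable and ∫_X ⟨g, φ_x⟩⟨φ_x, f⟩ dν(x) = ⟨g, h⟩}, with S f := h. Then S is injective and bounded from below: m‖f‖ ≤ ‖S f‖ for all f ∈ Dom(S); in particular its inverse S⁻¹ : Ran(S) → Dom(S) is bounded with ‖S⁻¹ g‖ ≤ m⁻¹‖g‖. -/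
open MeasureTheory Filter
open scoped ComplexInnerProductSpace ENNReal

namespace SemiFrames7

variable {X : Type*} [MeasurableSpace X] (ν : Measure X)
  {H : Type*} [NormedAddCommGroup H] [InnerProductSpace ℂ H] [CompleteSpace H]
  (φ : X → H)

/-- `(f, h)` belongs to the graph of the weakly defined frame operator `S`:
`∫ ⟪g, φ x⟫ ⟪φ x, f⟫ dν = ⟪g, h⟫` for every `g ∈ H`, the integrand being integrable. -/
def MemGraphFrameOp (f h : H) : Prop :=
  ∀ g : H, Integrable (fun x => ⟪g, φ x⟫ * ⟪φ x, f⟫) ν ∧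
    ∫ x, ⟪g, φ x⟫ * ⟪φ x, f⟫ ∂ν = ⟪g, h⟫

end SemiFrames7

namespace SemiFrames7

/-!
Testing the weak identity defining `S f = h` against `g = f` turns its integrand into
`|⟪φ x, f⟫|²`, so `∫ |⟪φ x, f⟫|² dν = ⟪f, h⟫ ≤ ‖f‖ ‖h‖`. The lower frame bound then gives
`m ‖f‖² ≤ ‖f‖ ‖h‖`, i.e. `m ‖f‖ ≤ ‖h‖`. Since the graph of `S` is closed under subtraction,
this lower bound applied to `S (f - f') = 0` gives injectivity.
-/

variable {X : Type*} [MeasurableSpace X] {ν : Measure X}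
  {H : Type*} [NormedAddCommGroup H] [InnerProductSpace ℂ H] {φ : X → H} {f f' h h' : H}

theorem MemGraphFrameOp.sub (hf : MemGraphFrameOp ν φ f h) (hf' : MemGraphFrameOp ν φ f' h') :
    MemGraphFrameOp ν φ (f - f') (h - h') := by
  intro g
  obtain ⟨hint, heq⟩ := hf g
  obtain ⟨hint', heq'⟩ := hf' g
  simp only [inner_sub_right, mul_sub]
  exact ⟨hint.sub hint', by rw [integral_sub hint hint', heq, heq']⟩

theorem MemGraphFrameOp.lintegral_nnnorm_inner_sq_le (hfh : MemGraphFrameOp ν φ f h) :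
    ∫⁻ x, (‖⟪φ x, f⟫‖₊ : ℝ≥0∞) ^ 2 ∂ν ≤ ENNReal.ofReal (‖f‖ * ‖h‖) := by
  obtain ⟨hint, heq⟩ := hfh f
  calc ∫⁻ x, (‖⟪φ x, f⟫‖₊ : ℝ≥0∞) ^ 2 ∂ν = ∫⁻ x, ‖⟪f, φ x⟫ * ⟪φ x, f⟫‖ₑ ∂ν := by
        refine lintegral_congr fun x => ?_
        rw [enorm_mul, ← enorm_eq_nnnorm, sq, ← ofReal_norm, ← ofReal_norm, norm_inner_symm f]
    _ = ENNReal.ofReal (∫ x, ‖⟪f, φ x⟫ * ⟪φ x, f⟫‖ ∂ν) :=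
        (ofReal_integral_norm_eq_lintegral_enorm hint).symm
    _ = ENNReal.ofReal (RCLike.re ⟪f, h⟫) := by
        simp only [← inner_mul_symm_re_eq_norm]
        rw [integral_re hint, heq]
    _ ≤ ENNReal.ofReal (‖f‖ * ‖h‖) :=
        ENNReal.ofReal_le_ofReal ((RCLike.re_le_norm _).trans (norm_inner_le_norm f h))

theorem MemGraphFrameOp.mul_norm_le_norm {m : ℝ}
    (hlower : ∀ f : H, ENNReal.ofReal (m * ‖f‖ ^ 2) ≤ ∫⁻ x, (‖⟪φ x, f⟫‖₊ : ℝ≥0∞) ^ 2 ∂ν)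
    (hfh : MemGraphFrameOp ν φ f h) : m * ‖f‖ ≤ ‖h‖ := by
  have hsq : m * ‖f‖ ^ 2 ≤ ‖f‖ * ‖h‖ :=
    (ENNReal.ofReal_le_ofReal_iff (by positivity)).1
      ((hlower f).trans hfh.lintegral_nnnorm_inner_sq_le)
  rcases (norm_nonneg f).eq_or_lt with hf0 | hf0
  · simp [← hf0]
  · nlinarith

theorem frame_operator_injective_bounded_below_general
    {X : Type*} [MeasurableSpace X] (ν : Measure X)
    {H : Type*} [NormedAddCommGroup H] [InnerProductSpace ℂ H]
    (φ : X → H)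
    (m : ℝ) (hm : 0 < m)
    (hlower : ∀ f : H,
      ENNReal.ofReal (m * ‖f‖ ^ 2) ≤ ∫⁻ x, (‖⟪φ x, f⟫‖₊ : ℝ≥0∞) ^ 2 ∂ν) :
    -- S is injective
    (∀ f f' h : H, MemGraphFrameOp ν φ f h → MemGraphFrameOp ν φ f' h → f = f') ∧
    -- S is bounded from below: m ‖f‖ ≤ ‖S f‖
    (∀ f h : H, MemGraphFrameOp ν φ f h → m * ‖f‖ ≤ ‖h‖) ∧
    -- in particular S⁻¹ : Ran S → Dom S is bounded with ‖S⁻¹ h‖ ≤ m⁻¹ ‖h‖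
    (∀ f h : H, MemGraphFrameOp ν φ f h → ‖f‖ ≤ m⁻¹ * ‖h‖) := by
  have bound : ∀ f h : H, MemGraphFrameOp ν φ f h → m * ‖f‖ ≤ ‖h‖ :=
    fun f h hfh => hfh.mul_norm_le_norm hlower
  refine ⟨fun f f' h hf hf' => ?_, bound, fun f h hfh => (le_inv_mul_iff₀ hm).2 (bound f h hfh)⟩
  have hdiff : m * ‖f - f'‖ ≤ 0 := by simpa using bound _ _ (hf.sub hf')
  have hnorm : ‖f - f'‖ = 0 := le_antisymm (nonpos_of_mul_nonpos_right hdiff hm) (norm_nonneg _)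
  rwa [norm_eq_zero, sub_eq_zero] at hnorm

/-- If `φ` satisfies the lower frame condition with bound `m > 0`, then
the weakly defined frame operator `S` is injective and bounded below by `m`; in particular
its inverse is bounded with bound `m⁻¹`. -/
theorem frame_operator_injective_bounded_below
    {X : Type*} [MeasurableSpace X] (ν : Measure X)
    {H : Type*} [NormedAddCommGroup H] [InnerProductSpace ℂ H] [CompleteSpace H]
    (φ : X → H)
    (hφmeas : ∀ f : H, AEMeasurable (fun x => ⟪φ x, f⟫) ν)
    (m : ℝ) (hm : 0 < m)
    (hlower : ∀ f : H,
      ENNReal.ofReal (m * ‖f‖ ^ 2) ≤ ∫⁻ x, (‖⟪φ x, f⟫‖₊ : ℝ≥0∞) ^ 2 ∂ν) :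
    -- S is injective
    (∀ f f' h : H, MemGraphFrameOp ν φ f h → MemGraphFrameOp ν φ f' h → f = f') ∧
    -- S is bounded from below: m ‖f‖ ≤ ‖S f‖
    (∀ f h : H, MemGraphFrameOp ν φ f h → m * ‖f‖ ≤ ‖h‖) ∧
    -- in particular S⁻¹ : Ran S → Dom S is bounded with ‖S⁻¹ h‖ ≤ m⁻¹ ‖h‖
    (∀ f h : H, MemGraphFrameOp ν φ f h → ‖f‖ ≤ m⁻¹ * ‖h‖) :=
  frame_operator_injective_bounded_below_general ν φ m hm hlower

end SemiFrames7
end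

section
/- Let H be a complex Hilbert space, (X, ν) a measure space, and ψ : X → H an upper semi-frame: ψ is total, x ↦ ⟨ψ_x, f⟩ is ν-measurable for each f, and 0 < ∫_X |⟨ψ_x, f⟩|² dν(x) ≤ M‖f‖² for all f ≠ 0 and some M < ∞. Let S : H → H be the bounded frame operator, characterized by ⟨g, S f⟩ = ∫_X ⟨g, ψ_x⟩⟨ψ_x, f⟩ dν(x) for all f, g ∈ H. Assume ψ is regular: for every x ∈ X there is g_x ∈ H with S g_x = ψ_x (g_x is unique since S is injective). Then for every f ∈ H and every f' ∈ Ran(S), the function x ↦ ⟨f, ψ_x⟩⟨g_x, f'⟩ is ν-integrable and ∫_X ⟨f, ψ_x⟩⟨g_x, f'⟩ dν(x) = ⟨f, f'⟩. -/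
open MeasureTheory Filter
open scoped ComplexInnerProductSpace ENNReal

/-- Let `ψ` be a regular upper semi-frame with (bounded) frame operator
`S` and let `g x = S⁻¹ ψ x` be the preimages of the frame vectors.  Then for every
`f ∈ H` and every `f' ∈ Ran(S)` one has the weak reconstruction formula
`∫ ⟪f, ψ x⟫ ⟪g x, f'⟫ dν = ⟪f, f'⟫`. -/
theorem regular_upper_semiframe_weak_reconstruction
    {H : Type*} [NormedAddCommGroup H] [InnerProductSpace ℂ H] [CompleteSpace H]
    {X : Type*} [MeasurableSpace X] (ν : Measure X)
    (ψ : X → H) (M : ℝ) (hM : 0 < M)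
    (hψmeas : ∀ f : H, AEMeasurable (fun x => ⟪ψ x, f⟫) ν)
    (hψtotal : (Submodule.span ℂ (Set.range ψ)).topologicalClosure = ⊤)
    (hupper : ∀ f : H, f ≠ 0 →
      0 < ∫⁻ x, (‖⟪ψ x, f⟫‖₊ : ℝ≥0∞) ^ 2 ∂ν ∧
      ∫⁻ x, (‖⟪ψ x, f⟫‖₊ : ℝ≥0∞) ^ 2 ∂ν ≤ ENNReal.ofReal (M * ‖f‖ ^ 2))
    (S : H →L[ℂ] H)
    (hS : ∀ f g : H, Integrable (fun x => ⟪g, ψ x⟫ * ⟪ψ x, f⟫) ν ∧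
      ∫ x, ⟪g, ψ x⟫ * ⟪ψ x, f⟫ ∂ν = ⟪g, S f⟫)
    (g : X → H) (hreg : ∀ x : X, S (g x) = ψ x) :
    ∀ f f' : H, f' ∈ Set.range ⇑S →
      Integrable (fun x => ⟪f, ψ x⟫ * ⟪g x, f'⟫) ν ∧
      ∫ x, ⟪f, ψ x⟫ * ⟪g x, f'⟫ ∂ν = ⟪f, f'⟫ := by
  -- S is self-adjoint
  have hsa : ∀ a b : H, ⟪a, S b⟫ = ⟪S a, b⟫ := by
    intro a b
    rw [← (hS b a).2, ← inner_conj_symm (S a) b, ← (hS a b).2, ← integral_conj]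
    congr 1
    funext x
    simp [mul_comm]
  rintro f f' ⟨h, rfl⟩
  have key : ∀ x, ⟪g x, S h⟫ = ⟪ψ x, h⟫ := by
    intro x
    rw [hsa, hreg]
  have : (fun x => ⟪f, ψ x⟫ * ⟪g x, S h⟫) = fun x => ⟪f, ψ x⟫ * ⟪ψ x, h⟫ := by
    funext x; rw [key]
  rw [this]
  exact ⟨(hS h f).1, (hS h f).2⟩
end

section
/- Let H be a complex Hilbert space, ι a countable index type, and ψ : ι → H a frame: there exist 0 < m ≤ M < ∞ such that for all f ∈ H the family (|⟨ψ_k, f⟩|²)_k is summable and m‖f‖² ≤ ∑_k |⟨ψ_k, f⟩|² ≤ M‖f‖². Let S : H → H be the bounded frame operator, so that for every f ∈ H the family (⟨ψ_k, f⟩·ψ_k)_k sums (unconditionally in norm) to S f. Then S has a bounded inverse T : H → H (T∘S = S∘T = id), and for every f ∈ H both reconstruction formulas hold with unconditional norm convergence: the family (⟨ψ_k, f⟩·T(ψ_k))_k sums to f, and the family (⟨T(ψ_k), f⟩·ψ_k)_k sums to f. -/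
open scoped ComplexInnerProductSpace InnerProductSpace

/-!
Expanding `⟪S f, f⟫` along the frame gives `∑ₖ |⟪ψ k, f⟫|²`, so `S` is self-adjoint and, by the
lower frame bound, `m ‖f‖² ≤ ‖⟪S f, f⟫‖`; such an operator on a Hilbert space is invertible.
Applying `T = S⁻¹` to the expansion of `S f` gives the first reconstruction formula; expanding
`S (T f) = f` and moving the self-adjoint `T` across the inner product gives the second.
-/

open RCLike ComplexConjugate

def IsFrameOperator {𝕜 H ι : Type*} [RCLike 𝕜] [NormedAddCommGroup H] [InnerProductSpace 𝕜 H]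
    (ψ : ι → H) (S : H →L[𝕜] H) : Prop :=
  ∀ f : H, HasSum (fun k => ⟪ψ k, f⟫_𝕜 • ψ k) (S f)

namespace IsFrameOperator

variable {𝕜 H ι : Type*} [RCLike 𝕜] [NormedAddCommGroup H] [InnerProductSpace 𝕜 H]
  {ψ : ι → H} {S : H →L[𝕜] H}

theorem hasSum_inner (hS : IsFrameOperator ψ S) (x y : H) :
    HasSum (fun k => conj ⟪ψ k, x⟫_𝕜 * ⟪ψ k, y⟫_𝕜) ⟪S x, y⟫_𝕜 := by
  simpa [inner_smul_left] using (hS x).mapL (innerSLFlip 𝕜 y)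

theorem isSelfAdjoint [CompleteSpace H] (hS : IsFrameOperator ψ S) : IsSelfAdjoint S := by
  refine LinearMap.IsSymmetric.isSelfAdjoint fun x y => ?_
  rw [← inner_conj_symm x]
  refine (hS.hasSum_inner x y).unique ?_
  simpa [mul_comm] using (hS.hasSum_inner y x).mapL (conjCLE (K := 𝕜)).toContinuousLinearMap

theorem inner_apply_self (hS : IsFrameOperator ψ S) (x : H) :
    ⟪S x, x⟫_𝕜 = ((∑' k, ‖⟪ψ k, x⟫_𝕜‖ ^ 2 : ℝ) : 𝕜) := by
  have h : HasSum (fun k => ((‖⟪ψ k, x⟫_𝕜‖ ^ 2 : ℝ) : 𝕜)) ⟪S x, x⟫_𝕜 := by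
    simpa only [RCLike.conj_mul, ofReal_pow] using hS.hasSum_inner x x
  rw [← h.tsum_eq, ofReal_tsum]

theorem isUnit [CompleteSpace H] (hS : IsFrameOperator ψ S) {m : ℝ} (hm : 0 < m)
    (hlower : ∀ f : H, m * ‖f‖ ^ 2 ≤ ∑' k, ‖⟪ψ k, f⟫_𝕜‖ ^ 2) : IsUnit S := by
  refine ContinuousLinearMap.isUnit_of_forall_le_norm_inner_map S (c := ⟨m, hm.le⟩) hm fun x => ?_
  rw [hS.inner_apply_self, norm_ofReal, mul_comm]
  exact (hlower x).trans (le_abs_self _)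

theorem hasSum_smul_apply_of_leftInverse (hS : IsFrameOperator ψ S) {T : H →L[𝕜] H}
    (hTS : Function.LeftInverse T S) (f : H) : HasSum (fun k => ⟪ψ k, f⟫_𝕜 • T (ψ k)) f := by
  simpa [hTS f] using (hS f).mapL T

theorem hasSum_inner_apply_smul_of_rightInverse [CompleteSpace H] (hS : IsFrameOperator ψ S)
    {T : H →L[𝕜] H} (hT : IsSelfAdjoint T) (hST : Function.RightInverse T S) (f : H) :
    HasSum (fun k => ⟪T (ψ k), f⟫_𝕜 • ψ k) f := by
  have h := hS (T f)
  rw [hST f] at h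
  exact h.congr_fun fun k => congrArg (· • ψ k) (hT.isSymmetric (ψ k) f)

end IsFrameOperator

theorem discrete_frame_reconstruction_general
    {H : Type*} [NormedAddCommGroup H] [InnerProductSpace ℂ H] [CompleteSpace H]
    {ι : Type*} (ψ : ι → H) (m M : ℝ) (hm : 0 < m)
    (hframe : ∀ f : H, Summable (fun k => ‖⟪ψ k, f⟫‖ ^ 2) ∧
      m * ‖f‖ ^ 2 ≤ ∑' k, ‖⟪ψ k, f⟫‖ ^ 2 ∧
      ∑' k, ‖⟪ψ k, f⟫‖ ^ 2 ≤ M * ‖f‖ ^ 2)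
    (S : H →L[ℂ] H)
    (hS : ∀ f : H, HasSum (fun k => ⟪ψ k, f⟫ • ψ k) (S f)) :
    ∃ T : H →L[ℂ] H,
      T.comp S = ContinuousLinearMap.id ℂ H ∧
      S.comp T = ContinuousLinearMap.id ℂ H ∧
      ∀ f : H, HasSum (fun k => ⟪ψ k, f⟫ • T (ψ k)) f ∧
        HasSum (fun k => ⟪T (ψ k), f⟫ • ψ k) f := by
  have hS : IsFrameOperator ψ S := hS
  have hunit : IsUnit S := hS.isUnit hm fun f => (hframe f).2.1
  have hTS : Ring.inverse S * S = 1 := Ring.inverse_mul_cancel S hunit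
  have hST : S * Ring.inverse S = 1 := Ring.mul_inverse_cancel S hunit
  exact ⟨Ring.inverse S, hTS, hST, fun f =>
    ⟨hS.hasSum_smul_apply_of_leftInverse (DFunLike.congr_fun hTS) f,
      hS.hasSum_inner_apply_smul_of_rightInverse hS.isSelfAdjoint.ringInverse
        (DFunLike.congr_fun hST) f⟩⟩

/-- For a (discrete) frame `ψ : ι → H` with frame operator `S`, the frame
operator has a bounded inverse `T` and one has the two reconstruction formulas, with
unconditional norm convergence: `f = ∑ₖ ⟪ψ k, f⟫ T(ψ k) = ∑ₖ ⟪T(ψ k), f⟫ ψ k`. -/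
theorem discrete_frame_reconstruction
    {H : Type*} [NormedAddCommGroup H] [InnerProductSpace ℂ H] [CompleteSpace H]
    {ι : Type*} [Countable ι] (ψ : ι → H) (m M : ℝ) (hm : 0 < m) (hmM : m ≤ M)
    (hframe : ∀ f : H, Summable (fun k => ‖⟪ψ k, f⟫‖ ^ 2) ∧
      m * ‖f‖ ^ 2 ≤ ∑' k, ‖⟪ψ k, f⟫‖ ^ 2 ∧
      ∑' k, ‖⟪ψ k, f⟫‖ ^ 2 ≤ M * ‖f‖ ^ 2)
    (S : H →L[ℂ] H)
    (hS : ∀ f : H, HasSum (fun k => ⟪ψ k, f⟫ • ψ k) (S f)) :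
    ∃ T : H →L[ℂ] H,
      T.comp S = ContinuousLinearMap.id ℂ H ∧
      S.comp T = ContinuousLinearMap.id ℂ H ∧
      ∀ f : H, HasSum (fun k => ⟪ψ k, f⟫ • T (ψ k)) f ∧
        HasSum (fun k => ⟪T (ψ k), f⟫ • ψ k) f :=
  discrete_frame_reconstruction_general ψ m M hm hframe S hS
end

section
/- Let H be a complex Hilbert space, ι a countable index type, and ψ : ι → H a regular upper semi-frame: ψ is a total Bessel sequence with frame operator S = C*C (which is injective), and every ψ_k lies in Ran(S); let g_k denote the unique vector with S g_k = ψ_k. Then for every f ∈ Ran(S), the family (⟨g_k, f⟩·ψ_k)_k sums in norm to f: f = ∑_k ⟨g_k, f⟩ ψ_k. -/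
open scoped ComplexInnerProductSpace

/-- For a regular (discrete) upper semi-frame `ψ : ι → H` with frame
operator `S` (injective) and `g k = S⁻¹ ψ k`, every `f ∈ Ran(S)` admits the norm-convergent
reconstruction `f = ∑ₖ ⟪g k, f⟫ ψ k`. -/
theorem regular_upper_semiframe_reconstruction_on_range
    {H : Type*} [NormedAddCommGroup H] [InnerProductSpace ℂ H] [CompleteSpace H]
    {ι : Type*} [Countable ι] (ψ : ι → H) (M : ℝ)
    (hbessel : ∀ f : H, Summable (fun k => ‖⟪ψ k, f⟫‖ ^ 2) ∧
      ∑' k, ‖⟪ψ k, f⟫‖ ^ 2 ≤ M * ‖f‖ ^ 2)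
    (htotal : (Submodule.span ℂ (Set.range ψ)).topologicalClosure = ⊤)
    (S : H →L[ℂ] H)
    (hS : ∀ f : H, HasSum (fun k => ⟪ψ k, f⟫ • ψ k) (S f))
    (hSinj : Function.Injective ⇑S)
    (g : ι → H) (hreg : ∀ k, S (g k) = ψ k) :
    ∀ f ∈ Set.range ⇑S, HasSum (fun k => ⟪g k, f⟫ • ψ k) f := by
  -- S is self-adjoint
  have hsa : ∀ a b : H, ⟪a, S b⟫ = ⟪S a, b⟫ := by
    intro a b
    have h1 : HasSum (fun k => ⟪ψ k, b⟫ * ⟪a, ψ k⟫) ⟪a, S b⟫ := by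
      simpa [inner_smul_right] using (innerSL ℂ a).hasSum (hS b)
    have h2 : HasSum (fun k => ⟪ψ k, a⟫ * ⟪b, ψ k⟫) ⟪b, S a⟫ := by
      simpa [inner_smul_right] using (innerSL ℂ b).hasSum (hS a)
    have h3 : HasSum (fun k => star (⟪ψ k, a⟫ * ⟪b, ψ k⟫)) (star ⟪b, S a⟫) := h2.star
    have h4 : HasSum (fun k => ⟪ψ k, b⟫ * ⟪a, ψ k⟫) ((starRingEnd ℂ) ⟪b, S a⟫) := by
      refine h3.congr_fun fun k => ?_
      simp only [star_mul', RCLike.star_def, inner_conj_symm]; ring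
    rw [h1.unique h4, inner_conj_symm]
  rintro f ⟨u, rfl⟩
  have : ∀ k, ⟪g k, S u⟫ = ⟪ψ k, u⟫ := fun k => by rw [hsa, hreg]
  simpa [this] using hS u
end

section
/- Let H be a complex Hilbert space, ι a countable index type, and ψ : ι → H a regular upper semi-frame with frame operator S and g_l the unique vector with S g_l = ψ_l. Then the sequence space Ran(C) has the reproducing property with respect to the matrix 𝒢_{k,l} = ⟨ψ_k, g_l⟩: for every f ∈ H and every k ∈ ι, the family (⟨ψ_k, g_l⟩·⟨ψ_l, f⟩)_l is summable and ∑_l ⟨ψ_k, g_l⟩⟨ψ_l, f⟩ = ⟨ψ_k, f⟩. -/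
open scoped ComplexInnerProductSpace

/-- For a regular (discrete) upper semi-frame `ψ : ι → H` with frame
operator `S` and `g l = S⁻¹ ψ l`, the matrix `𝒢ₖₗ = ⟪ψ k, g l⟫` reproduces the analysis
coefficients: for every `f ∈ H` and `k`, `∑ₗ ⟪ψ k, g l⟫ ⟪ψ l, f⟫ = ⟪ψ k, f⟫`
(the family being summable). -/
theorem regular_upper_semiframe_reproducing_matrix
    {H : Type*} [NormedAddCommGroup H] [InnerProductSpace ℂ H] [CompleteSpace H]
    {ι : Type*} [Countable ι] (ψ : ι → H) (M : ℝ)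
    (hbessel : ∀ f : H, Summable (fun k => ‖⟪ψ k, f⟫‖ ^ 2) ∧
      ∑' k, ‖⟪ψ k, f⟫‖ ^ 2 ≤ M * ‖f‖ ^ 2)
    (htotal : (Submodule.span ℂ (Set.range ψ)).topologicalClosure = ⊤)
    (S : H →L[ℂ] H)
    (hS : ∀ f : H, HasSum (fun k => ⟪ψ k, f⟫ • ψ k) (S f))
    (hSinj : Function.Injective ⇑S)
    (g : ι → H) (hreg : ∀ l, S (g l) = ψ l) :
    ∀ (f : H) (k : ι), HasSum (fun l => ⟪ψ k, g l⟫ * ⟪ψ l, f⟫) ⟪ψ k, f⟫ := by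
  -- S is self-adjoint
  have hadj : ∀ a b : H, ⟪S a, b⟫ = ⟪a, S b⟫ := by
    intro a b
    have h1 : HasSum (fun l => ⟪ψ l, b⟫ * ⟪a, ψ l⟫) ⟪a, S b⟫ := by
      have := (innerSL ℂ a).hasSum (hS b)
      simpa [inner_smul_right] using this
    have h2 : HasSum (fun l => ⟪ψ l, a⟫ * ⟪b, ψ l⟫) ⟪b, S a⟫ := by
      have := (innerSL ℂ b).hasSum (hS a)
      simpa [inner_smul_right] using this
    have h3 : HasSum (fun l => star (⟪ψ l, a⟫ * ⟪b, ψ l⟫)) (star ⟪b, S a⟫) :=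
      h2.star
    have h4 : HasSum (fun l => ⟪ψ l, b⟫ * ⟪a, ψ l⟫) (star ⟪b, S a⟫) := by
      refine h3.congr_fun fun l => ?_
      symm
      calc star (⟪ψ l, a⟫ * ⟪b, ψ l⟫) = star ⟪b, ψ l⟫ * star ⟪ψ l, a⟫ := star_mul _ _
        _ = ⟪ψ l, b⟫ * ⟪a, ψ l⟫ := by
            rw [← starRingEnd_apply, ← starRingEnd_apply, inner_conj_symm, inner_conj_symm]
    have h5 := h1.unique h4
    rw [← inner_conj_symm (S a) b, starRingEnd_apply]
    exact h5.symm
  intro f k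
  have h1 : HasSum (fun l => ⟪ψ l, f⟫ * ⟪g k, ψ l⟫) ⟪g k, S f⟫ := by
    have := (innerSL ℂ (g k)).hasSum (hS f)
    simpa [inner_smul_right] using this
  have key : ∀ l, ⟪ψ l, f⟫ * ⟪g k, ψ l⟫ = ⟪ψ k, g l⟫ * ⟪ψ l, f⟫ := by
    intro l
    have : ⟪g k, ψ l⟫ = ⟪ψ k, g l⟫ := by
      rw [← hreg l, ← hadj, hreg k]
    rw [this, mul_comm]
  have h2 : HasSum (fun l => ⟪ψ k, g l⟫ * ⟪ψ l, f⟫) ⟪g k, S f⟫ :=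
    h1.congr_fun fun l => (key l).symm
  have : ⟪g k, S f⟫ = ⟪ψ k, f⟫ := by rw [← hadj, hreg k]
  rwa [this] at h2
end

section
/- Let H be a complex Hilbert space, ι a countable index type, and ψ : ι → H a total Bessel sequence with bounded analysis operator C : H → ℓ²(ι), (C f)_k = ⟨ψ_k, f⟩, frame operator S = C*C with positive square root √S, and Gram operator G = C C* with positive square root √G. Then for every f ∈ H there exists a unique c in the closure of Ran(C) with √G c = C f, and for this c the family (c_k·ψ_k)_k sums in norm to √S f, i.e. √S f = ∑_k c_k ψ_k = C* c. In particular, since √S is injective, f is the unique vector h ∈ H with √S h = ∑_k c_k ψ_k (reconstruction of every f ∈ H from its altered analysis coefficients √G⁻¹ C f). -/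
open scoped ComplexOrder ComplexInnerProductSpace
open ContinuousLinearMap Filter Topology

/-!
Since `G C = C C* C = C S`, the positive operator `diag(S, G)` on `H ⊕ ℓ²` commutes with the
off-diagonal block `!![0, 0; C, 0]`, hence so does its square root `diag(√S, √G)`; this is the
intertwining `√G C = C √S`. From `√S² = C* C` and `√G² = C C*` we get `‖√S h‖ = ‖C h‖` and
`‖√G c‖ = ‖C* c‖`. Totality makes `C`, hence `√S`, injective, so the self-adjoint `√S` has dense
range. Approximating `f` by `√S gₙ`, the sequence `C gₙ` is Cauchy and its limit `c` satisfies
`√G c = C f` and `C* c = √S f`. Uniqueness holds because `ker √G = ker C* = (Ran C)ᗮ` meets the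
closure of `Ran C` only in `0`.
-/

namespace ContinuousLinearMap

section Block

variable {H L : Type*} [NormedAddCommGroup H] [InnerProductSpace ℂ H]
  [NormedAddCommGroup L] [InnerProductSpace ℂ L]

/-- The block operator `!![a, b; c, d]` on the Hilbert sum `H ⊕ L`. -/
noncomputable def blockL2 (a : H →L[ℂ] H) (b : L →L[ℂ] H) (c : H →L[ℂ] L) (d : L →L[ℂ] L) :
    WithLp 2 (H × L) →L[ℂ] WithLp 2 (H × L) :=
  (WithLp.prodContinuousLinearEquiv 2 ℂ H L).symm.toContinuousLinearMap ∘L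
    ((a.coprod b).prod (c.coprod d)) ∘L
    (WithLp.prodContinuousLinearEquiv 2 ℂ H L).toContinuousLinearMap

variable {a : H →L[ℂ] H} {b : L →L[ℂ] H} {c : H →L[ℂ] L} {d : L →L[ℂ] L}

@[simp]
lemma blockL2_fst (x : WithLp 2 (H × L)) : (blockL2 a b c d x).fst = a x.fst + b x.snd := rfl

@[simp]
lemma blockL2_snd (x : WithLp 2 (H × L)) : (blockL2 a b c d x).snd = c x.fst + d x.snd := rfl

lemma isPositive_blockL2_diag {s : H →L[ℂ] H} {t : L →L[ℂ] L} (hs : s.IsPositive)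
    (ht : t.IsPositive) : (blockL2 s 0 0 t).IsPositive := by
  refine (isPositive_iff _).2 ⟨fun x y => ?_, fun x => ?_⟩
  · simp [hs.inner_left_eq_inner_right, ht.inner_left_eq_inner_right]
  · simpa using add_nonneg (hs.inner_nonneg_left x.fst) (ht.inner_nonneg_left x.snd)

lemma comp_eq_comp_of_sq_comp_eq_comp_sq [CompleteSpace H] [CompleteSpace L] {s : H →L[ℂ] H}
    {t : L →L[ℂ] L} (hs : s.IsPositive) (ht : t.IsPositive) {X : H →L[ℂ] L}
    (h : (t ∘L t) ∘L X = X ∘L (s ∘L s)) : t ∘L X = X ∘L s := by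
  set A := blockL2 s 0 0 t
  have hA : 0 ≤ A := (nonneg_iff_isPositive A).2 (isPositive_blockL2_diag hs ht)
  have hcomm : Commute (A * A) (blockL2 0 0 X 0) := by
    rw [commute_iff_eq]
    ext x : 1
    refine (WithLp.ext_iff 2).2 (Prod.ext ?_ ?_)
    · simp [A]
    · simpa [A] using congr($h x.fst)
  have hAcomm : Commute (CFC.sqrt (A * A)) (blockL2 0 0 X 0) :=
    CFC.sqrt_eq_cfc (a := A * A) ▸ hcomm.cfc_nnreal NNReal.sqrt
  rw [CFC.sqrt_mul_self A hA] at hAcomm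
  ext x
  simpa [A] using congr(($hAcomm.eq (WithLp.toLp 2 (x, 0))).snd)

end Block

section Hilbert

variable {𝕜 E F : Type*} [RCLike 𝕜]
  [NormedAddCommGroup E] [InnerProductSpace 𝕜 E] [CompleteSpace E]
  [NormedAddCommGroup F] [InnerProductSpace 𝕜 F] [CompleteSpace F]

lemma norm_apply_eq_of_comp_self_eq_adjoint_comp {A : E →L[𝕜] E} (hA : IsSelfAdjoint A)
    {T : E →L[𝕜] F} (h : A ∘L A = adjoint T ∘L T) (x : E) : ‖A x‖ = ‖T x‖ := by
  have hsq := A.apply_norm_sq_eq_inner_adjoint_left x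
  rw [hA.adjoint_eq, h, ← T.apply_norm_sq_eq_inner_adjoint_left] at hsq
  exact (pow_left_inj₀ (norm_nonneg _) (norm_nonneg _) two_ne_zero).1 hsq

lemma denseRange_of_isSelfAdjoint_of_injective {A : E →L[𝕜] E} (hA : IsSelfAdjoint A)
    (hinj : Function.Injective A) : DenseRange A := by
  have hker : (LinearMap.range (A : E →ₗ[𝕜] E))ᗮ = ⊥ := by
    rw [hA.isSymmetric.orthogonal_range, LinearMap.ker_eq_bot]
    exact hinj
  have := Submodule.dense_iff_topologicalClosure_eq_top.2
    (Submodule.topologicalClosure_eq_top_iff.2 hker)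
  simpa only [DenseRange, LinearMap.coe_range, coe_coe] using this

lemma injOn_adjoint_closure_range (T : E →L[𝕜] F) :
    Set.InjOn (adjoint T) (closure (Set.range T)) := by
  intro x hx y hy hxy
  have hclosure : closure (Set.range T) = (T.range.topologicalClosure : Set F) := by
    rw [Submodule.topologicalClosure_coe, LinearMap.coe_range, coe_coe]
  rw [hclosure] at hx hy
  have hmem : x - y ∈ T.rangeᗮ ⊓ T.rangeᗮᗮ := by
    refine ⟨?_, ?_⟩
    · rw [orthogonal_range]
      simp [hxy]
    · rw [Submodule.orthogonal_orthogonal_eq_closure]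
      exact sub_mem hx hy
  rw [Submodule.inf_orthogonal_eq_bot] at hmem
  exact sub_eq_zero.1 hmem

end Hilbert

section Normed

variable {𝕜 E F F' G : Type*} [RCLike 𝕜]
  [NormedAddCommGroup E] [NormedSpace 𝕜 E] [NormedAddCommGroup F] [NormedSpace 𝕜 F]
  [NormedAddCommGroup F'] [NormedSpace 𝕜 F'] [NormedAddCommGroup G] [NormedSpace 𝕜 G]

lemma apply_eq_apply_iff_of_norm_apply_eq {A : E →L[𝕜] F} {B : E →L[𝕜] F'}
    (h : ∀ x, ‖A x‖ = ‖B x‖) {x y : E} : A x = A y ↔ B x = B y := by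
  rw [← sub_eq_zero, ← map_sub, ← norm_eq_zero, h, norm_eq_zero, map_sub, sub_eq_zero]

lemma exists_tendsto_of_norm_apply_eq [CompleteSpace F] {A : E →L[𝕜] F'} {T : E →L[𝕜] F}
    (h : ∀ x, ‖T x‖ = ‖A x‖) {f : F'} (hf : f ∈ closure (Set.range A)) :
    ∃ c ∈ closure (Set.range T), ∃ g : ℕ → E,
      Tendsto (A ∘ g) atTop (𝓝 f) ∧ Tendsto (T ∘ g) atTop (𝓝 c) := by
  obtain ⟨u, hu, hlim⟩ := mem_closure_iff_seq_limit.1 hf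
  choose g hg using hu
  have hAg : Tendsto (A ∘ g) atTop (𝓝 f) := by simpa [Function.comp_def, hg] using hlim
  have hcauchy : CauchySeq (T ∘ g) := by
    refine Metric.cauchySeq_iff.2 fun ε hε => ?_
    obtain ⟨N, hN⟩ := Metric.cauchySeq_iff.1 hAg.cauchySeq ε hε
    refine ⟨N, fun m hm n hn => ?_⟩
    simpa only [Function.comp_apply, dist_eq_norm, ← map_sub, h] using hN m hm n hn
  obtain ⟨c, hc⟩ := cauchySeq_tendsto_of_complete hcauchy
  exact ⟨c, mem_closure_of_tendsto hc (.of_forall fun n => ⟨g n, rfl⟩), g, hAg, hc⟩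

lemma apply_eq_of_tendsto_of_comp_eq {α : Type*} {l : Filter α} [l.NeBot] {A : E →L[𝕜] F'}
    {T : E →L[𝕜] F} {g : α → E} {f : F'} {c : F} (hA : Tendsto (A ∘ g) l (𝓝 f))
    (hT : Tendsto (T ∘ g) l (𝓝 c)) {P : F →L[𝕜] G} {Q : F' →L[𝕜] G}
    (h : P ∘L T = Q ∘L A) : P c = Q f := by
  refine tendsto_nhds_unique ((P.continuous.tendsto c).comp hT) ?_
  have hQ := (Q.continuous.tendsto f).comp hA
  rwa [← Function.comp_assoc, ← coe_comp, ← h, coe_comp, Function.comp_assoc] at hQ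

end Normed

end ContinuousLinearMap

section AnalysisOperator

variable {𝕜 H ι : Type*} [RCLike 𝕜] [NormedAddCommGroup H] [InnerProductSpace 𝕜 H]
  [CompleteSpace H] {ψ : ι → H} {C : H →L[𝕜] lp (fun _ : ι => 𝕜) 2}

lemma adjoint_lp_single [DecidableEq ι] (hC : ∀ f k, C f k = inner 𝕜 (ψ k) f) (k : ι)
    (a : 𝕜) : adjoint C (lp.single 2 k a) = a • ψ k := by
  refine ext_inner_right 𝕜 fun f => ?_
  rw [adjoint_inner_left, lp.inner_single_left, hC, inner_smul_left, RCLike.inner_apply']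

lemma hasSum_smul_adjoint_apply (hC : ∀ f k, C f k = inner 𝕜 (ψ k) f)
    (c : lp (fun _ : ι => 𝕜) 2) : HasSum (fun k => c k • ψ k) (adjoint C c) := by
  classical
  simpa only [map_finsetSum, adjoint_lp_single hC] using
    (lp.hasSum_single ENNReal.ofNat_ne_top c).mapL (adjoint C)

lemma injective_of_topologicalClosure_span_eq_top (hC : ∀ f k, C f k = inner 𝕜 (ψ k) f)
    (htotal : (Submodule.span 𝕜 (Set.range ψ)).topologicalClosure = ⊤) :
    Function.Injective C := by
  refine (injective_iff_map_eq_zero C).2 fun f hf => ?_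
  have hperp : f ∈ (Submodule.span 𝕜 (Set.range ψ))ᗮ := by
    have hspan : Submodule.span 𝕜 (Set.range ψ) ≤ (𝕜 ∙ f)ᗮ := by
      refine Submodule.span_le.2 (Set.range_subset_iff.2 fun k => ?_)
      rw [SetLike.mem_coe, Submodule.mem_orthogonal_singleton_iff_inner_left, ← hC, hf]
      rfl
    exact (Submodule.mem_orthogonal _ _).2 fun u hu =>
      Submodule.mem_orthogonal_singleton_iff_inner_left.1 (hspan hu)
  rwa [Submodule.topologicalClosure_eq_top_iff.1 htotal, Submodule.mem_bot] at hperp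

end AnalysisOperator

theorem reconstruction_with_altered_coefficients_general
    {H : Type*} [NormedAddCommGroup H] [InnerProductSpace ℂ H] [CompleteSpace H]
    {ι : Type*} (ψ : ι → H)
    (htotal : (Submodule.span ℂ (Set.range ψ)).topologicalClosure = ⊤)
    (C : H →L[ℂ] lp (fun _ : ι => ℂ) 2)
    (hC : ∀ (f : H) (k : ι), C f k = ⟪ψ k, f⟫)
    (sqrtS : H →L[ℂ] H)
    (hSpos : sqrtS.IsPositive)
    (hSsq : sqrtS.comp sqrtS = (ContinuousLinearMap.adjoint C).comp C)
    (sqrtG : lp (fun _ : ι => ℂ) 2 →L[ℂ] lp (fun _ : ι => ℂ) 2)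
    (hGpos : sqrtG.IsPositive)
    (hGsq : sqrtG.comp sqrtG = C.comp (ContinuousLinearMap.adjoint C)) :
    ∀ f : H,
      (∃! c : lp (fun _ : ι => ℂ) 2,
        c ∈ closure (Set.range ⇑C) ∧ sqrtG c = C f) ∧
      ∀ c : lp (fun _ : ι => ℂ) 2, c ∈ closure (Set.range ⇑C) → sqrtG c = C f →
        HasSum (fun k => c k • ψ k) (sqrtS f) ∧
        (ContinuousLinearMap.adjoint C) c = sqrtS f ∧
        ∀ h : H, sqrtS h = (ContinuousLinearMap.adjoint C) c → h = f := by
  intro f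
  have hS := norm_apply_eq_of_comp_self_eq_adjoint_comp hSpos.isSelfAdjoint hSsq
  have hG := norm_apply_eq_of_comp_self_eq_adjoint_comp hGpos.isSelfAdjoint
    (T := adjoint C) (by rw [adjoint_adjoint, hGsq])
  have hSinj : Function.Injective sqrtS := fun x y hxy =>
    injective_of_topologicalClosure_span_eq_top hC htotal
      ((apply_eq_apply_iff_of_norm_apply_eq hS).1 hxy)
  obtain ⟨c, hc, g, hSg, hCg⟩ := exists_tendsto_of_norm_apply_eq (fun x => (hS x).symm)
    (denseRange_of_isSelfAdjoint_of_injective hSpos.isSelfAdjoint hSinj f)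
  have hGc : sqrtG c = C f := apply_eq_of_tendsto_of_comp_eq hSg hCg
    (comp_eq_comp_of_sq_comp_eq_comp_sq hSpos hGpos (by rw [hGsq, hSsq]; rfl))
  have hCc : adjoint C c = sqrtS f := apply_eq_of_tendsto_of_comp_eq hSg hCg hSsq.symm
  have huniq : ∀ c' ∈ closure (Set.range C), sqrtG c' = C f → c' = c := fun c' hc' hGc' =>
    injOn_adjoint_closure_range C hc' hc
      ((apply_eq_apply_iff_of_norm_apply_eq hG).1 (hGc'.trans hGc.symm))
  refine ⟨⟨c, ⟨hc, hGc⟩, fun c' hc' => huniq c' hc'.1 hc'.2⟩, fun c' hc' hGc' => ?_⟩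
  rw [huniq c' hc' hGc']
  exact ⟨hCc ▸ hasSum_smul_adjoint_apply hC c, hCc, fun h hh => hSinj (hh.trans hCc)⟩

/-- Let `ψ : ι → H` be a total Bessel sequence with analysis operator
`C`, frame operator `S = C*C` with positive square root `√S`, and Gram operator `G = C C*`
with positive square root `√G`.  Then for every `f ∈ H` there is a unique
`c ∈ cl(Ran C)` with `√G c = C f`, and for this `c` one has
`√S f = ∑ₖ cₖ ψₖ = C* c` (norm convergence); since `√S` is injective, `f` is the unique
vector `h` with `√S h = C* c`. -/
theorem reconstruction_with_altered_coefficients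
    {H : Type*} [NormedAddCommGroup H] [InnerProductSpace ℂ H] [CompleteSpace H]
    {ι : Type*} [Countable ι] (ψ : ι → H) (M : ℝ)
    (hbessel : ∀ f : H, Summable (fun k => ‖⟪ψ k, f⟫‖ ^ 2) ∧
      ∑' k, ‖⟪ψ k, f⟫‖ ^ 2 ≤ M * ‖f‖ ^ 2)
    (htotal : (Submodule.span ℂ (Set.range ψ)).topologicalClosure = ⊤)
    (C : H →L[ℂ] lp (fun _ : ι => ℂ) 2)
    (hC : ∀ (f : H) (k : ι), C f k = ⟪ψ k, f⟫)
    (sqrtS : H →L[ℂ] H)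
    (hSpos : sqrtS.IsPositive)
    (hSsq : sqrtS.comp sqrtS = (ContinuousLinearMap.adjoint C).comp C)
    (sqrtG : lp (fun _ : ι => ℂ) 2 →L[ℂ] lp (fun _ : ι => ℂ) 2)
    (hGpos : sqrtG.IsPositive)
    (hGsq : sqrtG.comp sqrtG = C.comp (ContinuousLinearMap.adjoint C)) :
    ∀ f : H,
      (∃! c : lp (fun _ : ι => ℂ) 2,
        c ∈ closure (Set.range ⇑C) ∧ sqrtG c = C f) ∧
      ∀ c : lp (fun _ : ι => ℂ) 2, c ∈ closure (Set.range ⇑C) → sqrtG c = C f →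
        HasSum (fun k => c k • ψ k) (sqrtS f) ∧
        (ContinuousLinearMap.adjoint C) c = sqrtS f ∧
        ∀ h : H, sqrtS h = (ContinuousLinearMap.adjoint C) c → h = f :=
  reconstruction_with_altered_coefficients_general ψ htotal C hC sqrtS hSpos hSsq sqrtG hGpos hGsq
end

section
/- Let H be a complex Hilbert space, ι a countable index type, and ψ : ι → H a total Bessel sequence with bounded analysis operator C : H → ℓ²(ι), (C f)_k = ⟨ψ_k, f⟩, synthesis operator D = C*, and Gram operator G = C ∘ D. Then for every f in Ran(D) there exists a unique c in the closure of Ran(C) such that G c = C f, and for this c the family (c_k·ψ_k)_k sums in norm to f: f = ∑_k c_k ψ_k. -/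
open scoped ComplexInnerProductSpace

/-!
Totality of `ψ` makes `C` injective, so `G c = C f` just says `D c = f`. Since
`closure (Ran C) = (ker D)ᗮ`, the map `D` is injective there and takes on it every value it
takes at all (project onto `(ker D)ᗮ`). Finally `D c = ∑ₖ cₖ ψₖ` is the image under `D` of
the expansion `c = ∑ₖ cₖ eₖ` in `ℓ²`.
-/

open scoped InnerProductSpace
open ContinuousLinearMap Submodule

section

variable {𝕜 E F : Type*} [RCLike 𝕜] [NormedAddCommGroup E] [InnerProductSpace 𝕜 E]
  [NormedAddCommGroup F] [InnerProductSpace 𝕜 F]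

theorem eq_zero_of_inner_eq_zero_of_topologicalClosure_span_eq_top [CompleteSpace E]
    {ι : Type*} {ψ : ι → E} (hψ : (span 𝕜 (Set.range ψ)).topologicalClosure = ⊤) {g : E}
    (hg : ∀ k, ⟪ψ k, g⟫_𝕜 = 0) : g = 0 := by
  have hperp : g ∈ (span 𝕜 (Set.range ψ))ᗮ :=
    (isOrtho_span.mpr (by rintro _ ⟨k, rfl⟩ _ rfl; exact hg k)).symm.le
      (mem_span_singleton_self g)
  rwa [topologicalClosure_eq_top_iff.mp hψ, mem_bot] at hperp

theorem ContinuousLinearMap.existsUnique_mem_orthogonal_ker_apply_eq [CompleteSpace E]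
    (T : E →L[𝕜] F) (a : E) : ∃! y, y ∈ (T : E →ₗ[𝕜] F).kerᗮ ∧ T y = T a := by
  set K := (T : E →ₗ[𝕜] F).ker
  obtain ⟨z, hz, y, hy, rfl⟩ := K.exists_add_mem_mem_orthogonal a
  have hTz : T z = 0 := hz
  refine ⟨y, ⟨hy, by rw [map_add, hTz, zero_add]⟩, ?_⟩
  rintro y' ⟨hy', hTy'⟩
  have hdiff : y' - y ∈ K ⊓ Kᗮ := by
    refine ⟨?_, Kᗮ.sub_mem hy' hy⟩
    change T (y' - y) = 0
    rw [map_sub, hTy', map_add, hTz, zero_add, sub_self]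
  rwa [K.inf_orthogonal_eq_bot, mem_bot, sub_eq_zero] at hdiff

theorem ContinuousLinearMap.closure_range_eq_orthogonal_ker_adjoint [CompleteSpace E]
    [CompleteSpace F] (T : E →L[𝕜] F) :
    closure (Set.range T) = ((adjoint T : F →ₗ[𝕜] E).kerᗮ : Set F) := by
  rw [orthogonal_ker, adjoint_adjoint, topologicalClosure_coe]
  rfl

theorem hasSum_adjoint_apply_of_apply_eq_inner [CompleteSpace E] {ι : Type*} {ψ : ι → E}
    (C : E →L[𝕜] lp (fun _ : ι => 𝕜) 2) (hC : ∀ f k, C f k = ⟪ψ k, f⟫_𝕜)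
    (c : lp (fun _ : ι => 𝕜) 2) : HasSum (fun k => c k • ψ k) (adjoint C c) := by
  classical
  have hsingle : ∀ k (z : 𝕜), adjoint C (lp.single 2 k z) = z • ψ k := fun k z =>
    ext_inner_left 𝕜 fun v => by
      rw [adjoint_inner_right, lp.inner_single_right, hC, inner_smul_right, ← inner_conj_symm v]
      rfl
  simpa only [hsingle] using (adjoint C).hasSum (lp.hasSum_single (by norm_num) c)

end

theorem reconstruction_on_range_of_synthesis_general
    {H : Type*} [NormedAddCommGroup H] [InnerProductSpace ℂ H] [CompleteSpace H]
    {ι : Type*} (ψ : ι → H)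
    (htotal : (Submodule.span ℂ (Set.range ψ)).topologicalClosure = ⊤)
    (C : H →L[ℂ] lp (fun _ : ι => ℂ) 2)
    (hC : ∀ (f : H) (k : ι), C f k = ⟪ψ k, f⟫) :
    ∀ f ∈ Set.range ⇑(ContinuousLinearMap.adjoint C),
      (∃! c : lp (fun _ : ι => ℂ) 2,
        c ∈ closure (Set.range ⇑C) ∧
        (C.comp (ContinuousLinearMap.adjoint C)) c = C f) ∧
      ∀ c : lp (fun _ : ι => ℂ) 2, c ∈ closure (Set.range ⇑C) →
        (C.comp (ContinuousLinearMap.adjoint C)) c = C f →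
        HasSum (fun k => c k • ψ k) f := by
  rintro f ⟨a, rfl⟩
  have hCinj : Function.Injective C := (injective_iff_map_eq_zero C).mpr fun g hg =>
    eq_zero_of_inner_eq_zero_of_topologicalClosure_span_eq_top htotal fun k => by
      rw [← hC, hg]
      rfl
  have hGram : ∀ c, (C.comp (adjoint C)) c = C (adjoint C a) ↔ adjoint C c = adjoint C a :=
    fun c => hCinj.eq_iff
  simp only [hGram, C.closure_range_eq_orthogonal_ker_adjoint, SetLike.mem_coe]
  exact ⟨(adjoint C).existsUnique_mem_orthogonal_ker_apply_eq a,
    fun c _ hc => hc ▸ hasSum_adjoint_apply_of_apply_eq_inner C hC c⟩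

/-- Let `ψ : ι → H` be a total Bessel sequence with analysis operator
`C`, synthesis operator `D = C*` and Gram operator `G = C D`.  Then for every
`f ∈ Ran(D)` there is a unique `c ∈ cl(Ran C)` with `G c = C f`, and for this `c` the
family `(cₖ ψₖ)` sums in norm to `f`. -/
theorem reconstruction_on_range_of_synthesis
    {H : Type*} [NormedAddCommGroup H] [InnerProductSpace ℂ H] [CompleteSpace H]
    {ι : Type*} [Countable ι] (ψ : ι → H) (M : ℝ)
    (hbessel : ∀ f : H, Summable (fun k => ‖⟪ψ k, f⟫‖ ^ 2) ∧
      ∑' k, ‖⟪ψ k, f⟫‖ ^ 2 ≤ M * ‖f‖ ^ 2)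
    (htotal : (Submodule.span ℂ (Set.range ψ)).topologicalClosure = ⊤)
    (C : H →L[ℂ] lp (fun _ : ι => ℂ) 2)
    (hC : ∀ (f : H) (k : ι), C f k = ⟪ψ k, f⟫) :
    ∀ f ∈ Set.range ⇑(ContinuousLinearMap.adjoint C),
      (∃! c : lp (fun _ : ι => ℂ) 2,
        c ∈ closure (Set.range ⇑C) ∧
        (C.comp (ContinuousLinearMap.adjoint C)) c = C f) ∧
      ∀ c : lp (fun _ : ι => ℂ) 2, c ∈ closure (Set.range ⇑C) →
        (C.comp (ContinuousLinearMap.adjoint C)) c = C f →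
        HasSum (fun k => c k • ψ k) f :=
  reconstruction_on_range_of_synthesis_general ψ htotal C hC
end

section
/- Let H be a complex Hilbert space, J a countable index type, n a natural number, ψ : J → Fin n → H a doubly indexed family, and v : J → ℝ with v_j > 0 for all j. For each j let H_j be the (finite-dimensional, hence closed) linear span of {ψ_j(i) : i ∈ Fin n} and P_j the orthogonal projection of H onto H_j. Assume: (i) there exist 0 < m ≤ M < ∞ such that for every f ∈ H, m‖f‖² ≤ ∑_j v_j² ∑_{i} |⟨ψ_j(i), f⟩|² ≤ M‖f‖² (the outer family being summable); (ii) there are constants A_j, B_j with A_j‖P_j f‖² ≤ ∑_i |⟨ψ_j(i), f⟩|² ≤ B_j‖P_j f‖² for all f ∈ H and all j; and (iii) A := inf_j A_j > 0 and B := sup_j B_j < ∞. Then for every f ∈ H the family (v_j²‖P_j f‖²)_j is summable and (m/B)‖f‖² ≤ ∑_j v_j² ‖P_j f‖² ≤ (M/A)‖f‖²; i.e. {H_j} is a fusion frame (frame of subspaces) with respect to the weights {v_j}. -/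
open scoped ComplexInnerProductSpace

/-!
Each block frame inequality, multiplied by `v j ^ 2` and made uniform in `j`, says that the
fusion-frame terms `v j ^ 2 * ‖P j f‖ ^ 2` and the weighted-frame terms
`v j ^ 2 * ∑ i, ‖⟪ψ j i, f⟫‖ ^ 2` are comparable up to the factors `A₀` and `B₀`. Comparison of
series then transfers summability and the frame bounds `m`, `M` of the second series to the first.
-/

theorem summable_of_nonneg_of_mul_le {J : Type*} {g h : J → ℝ} {a : ℝ} (ha : 0 < a)
    (hg : ∀ j, 0 ≤ g j) (hgh : ∀ j, a * g j ≤ h j) (hh : Summable h) : Summable g :=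
  Summable.of_nonneg_of_le hg (fun j => by rw [inv_mul_eq_div, le_div_iff₀' ha]; exact hgh j)
    (hh.mul_left a⁻¹)

theorem summable_and_tsum_bounds_of_mul_le_of_le_mul {J : Type*} {g h : J → ℝ} {a b : ℝ}
    (ha : 0 < a) (hb : 0 < b) (hg : ∀ j, 0 ≤ g j) (hgh : ∀ j, a * g j ≤ h j)
    (hhg : ∀ j, h j ≤ b * g j) (hh : Summable h) :
    Summable g ∧ (∑' j, h j) / b ≤ ∑' j, g j ∧ ∑' j, g j ≤ (∑' j, h j) / a := by
  have hgs : Summable g := summable_of_nonneg_of_mul_le ha hg hgh hh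
  refine ⟨hgs, ?_, ?_⟩
  · rw [div_le_iff₀' hb, ← tsum_mul_left]
    exact hh.tsum_le_tsum hhg (hgs.mul_left b)
  · rw [le_div_iff₀' ha, ← tsum_mul_left]
    exact (hgs.mul_left a).tsum_le_tsum hgh hh

theorem weighted_frame_gives_fusion_frame_general
    {H : Type*} [NormedAddCommGroup H] [InnerProductSpace ℂ H]
    {J : Type*} (n : ℕ) (ψ : J → Fin n → H)
    (v : J → ℝ)
    (P : J → H →L[ℂ] H)
    (m M : ℝ)
    (hframe : ∀ f : H,
      Summable (fun j => v j ^ 2 * ∑ i, ‖⟪ψ j i, f⟫‖ ^ 2) ∧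
      m * ‖f‖ ^ 2 ≤ ∑' j, v j ^ 2 * ∑ i, ‖⟪ψ j i, f⟫‖ ^ 2 ∧
      ∑' j, v j ^ 2 * ∑ i, ‖⟪ψ j i, f⟫‖ ^ 2 ≤ M * ‖f‖ ^ 2)
    (A B : J → ℝ)
    (hAB : ∀ (j : J) (f : H),
      A j * ‖P j f‖ ^ 2 ≤ ∑ i, ‖⟪ψ j i, f⟫‖ ^ 2 ∧
      ∑ i, ‖⟪ψ j i, f⟫‖ ^ 2 ≤ B j * ‖P j f‖ ^ 2)
    (A₀ B₀ : ℝ) (hA₀ : 0 < A₀) (hB₀ : 0 < B₀)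
    (hA : ∀ j, A₀ ≤ A j) (hB : ∀ j, B j ≤ B₀) :
    ∀ f : H, Summable (fun j => v j ^ 2 * ‖P j f‖ ^ 2) ∧
      (m / B₀) * ‖f‖ ^ 2 ≤ ∑' j, v j ^ 2 * ‖P j f‖ ^ 2 ∧
      ∑' j, v j ^ 2 * ‖P j f‖ ^ 2 ≤ (M / A₀) * ‖f‖ ^ 2 := by
  intro f
  obtain ⟨hsum, hlow, hup⟩ := hframe f
  have hA₀_le j : A₀ * (v j ^ 2 * ‖P j f‖ ^ 2) ≤ v j ^ 2 * ∑ i, ‖⟪ψ j i, f⟫‖ ^ 2 := by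
    rw [mul_left_comm]
    gcongr
    exact (mul_le_mul_of_nonneg_right (hA j) (sq_nonneg _)).trans (hAB j f).1
  have hle_B₀ j : v j ^ 2 * ∑ i, ‖⟪ψ j i, f⟫‖ ^ 2 ≤ B₀ * (v j ^ 2 * ‖P j f‖ ^ 2) := by
    rw [mul_left_comm]
    gcongr
    exact (hAB j f).2.trans (mul_le_mul_of_nonneg_right (hB j) (sq_nonneg _))
  obtain ⟨hsummable, hge, hle⟩ := summable_and_tsum_bounds_of_mul_le_of_le_mul hA₀ hB₀
    (fun j => by positivity) hA₀_le hle_B₀ hsum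
  refine ⟨hsummable, ?_, ?_⟩
  · rw [div_mul_eq_mul_div]
    exact (div_le_div_of_nonneg_right hlow hB₀.le).trans hge
  · rw [div_mul_eq_mul_div]
    exact hle.trans (div_le_div_of_nonneg_right hup hA₀.le)

/-- Let `ψ : J → Fin n → H` be a doubly indexed family and `v : J → ℝ`
positive weights.  Let `H_j = span {ψ j i}` and `P j` the orthogonal projection onto
`H_j`.  If the family `(v_j ψ j i)` is a weighted frame with bounds `m, M`, each block
`(ψ j i)_i` is a frame for `H_j` with bounds `A j, B j`, and `A₀ ≤ A j`, `B j ≤ B₀` with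
`0 < A₀` and `0 < B₀ < ∞`, then `{H_j}` is a fusion frame with respect to the weights
`{v_j}`, with bounds `m / B₀` and `M / A₀`. -/
theorem weighted_frame_gives_fusion_frame
    {H : Type*} [NormedAddCommGroup H] [InnerProductSpace ℂ H] [CompleteSpace H]
    {J : Type*} [Countable J] (n : ℕ) (ψ : J → Fin n → H)
    (v : J → ℝ) (hv : ∀ j, 0 < v j)
    (P : J → H →L[ℂ] H)
    (hP : ∀ (j : J) (f : H), P j f ∈ Submodule.span ℂ (Set.range (ψ j)) ∧
      f - P j f ∈ (Submodule.span ℂ (Set.range (ψ j)))ᗮ)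
    (m M : ℝ) (hm : 0 < m) (hmM : m ≤ M)
    (hframe : ∀ f : H,
      Summable (fun j => v j ^ 2 * ∑ i, ‖⟪ψ j i, f⟫‖ ^ 2) ∧
      m * ‖f‖ ^ 2 ≤ ∑' j, v j ^ 2 * ∑ i, ‖⟪ψ j i, f⟫‖ ^ 2 ∧
      ∑' j, v j ^ 2 * ∑ i, ‖⟪ψ j i, f⟫‖ ^ 2 ≤ M * ‖f‖ ^ 2)
    (A B : J → ℝ)
    (hAB : ∀ (j : J) (f : H),
      A j * ‖P j f‖ ^ 2 ≤ ∑ i, ‖⟪ψ j i, f⟫‖ ^ 2 ∧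
      ∑ i, ‖⟪ψ j i, f⟫‖ ^ 2 ≤ B j * ‖P j f‖ ^ 2)
    (A₀ B₀ : ℝ) (hA₀ : 0 < A₀) (hB₀ : 0 < B₀)
    (hA : ∀ j, A₀ ≤ A j) (hB : ∀ j, B j ≤ B₀) :
    ∀ f : H, Summable (fun j => v j ^ 2 * ‖P j f‖ ^ 2) ∧
      (m / B₀) * ‖f‖ ^ 2 ≤ ∑' j, v j ^ 2 * ‖P j f‖ ^ 2 ∧
      ∑' j, v j ^ 2 * ‖P j f‖ ^ 2 ≤ (M / A₀) * ‖f‖ ^ 2 :=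
  weighted_frame_gives_fusion_frame_general n ψ v P m M hframe A B hAB A₀ B₀ hA₀ hB₀ hA hB
end
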